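/- arXiv:2604.00751 — 9 statements merged into one kernel-verified Lean document; each statement's English description precedes it below -/
import Mathlib

section
/- Let 0 ≤ r ≤ d. The subspace W_r = span{v_I : deg I > r} of Λ^d ℂ^n equals the linear span of all pure wedge products z_1 ∧ ⋯ ∧ z_d with z_1,…,z_d ∈ ℂ^n such that at least r+1 of the vectors z_1,…,z_d lie in V_{n−d}. -/
/-- The `i`-th standard basis vector of `ℂ^n`. -/
noncomputable def ee (n : ℕ) (i : Fin n) : Fin n → ℂ := Pi.single i 1

/-- The degree of a subset `I ⊆ {1,…,n}` (0-indexed: `deg I = #{i ∈ I : i ≥ d}`). -/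
def degS (n d : ℕ) (I : Finset (Fin n)) : ℕ := (I.filter fun i : Fin n => d ≤ i.val).card

/-- The wedge basis vector `v_I = e_{i_1} ∧ ⋯ ∧ e_{i_d}` for `I = {i_1 < ⋯ < i_d}`. -/
noncomputable def vI (n d : ℕ) (I : Finset (Fin n)) (hI : I.card = d) :
    ExteriorAlgebra ℂ (Fin n → ℂ) :=
  ExteriorAlgebra.ιMulti ℂ d fun k => ee n (I.orderIsoOfFin hI k)

/-- `V_{n-d}`: the span of the last `n - d` standard basis vectors. -/
noncomputable def Vhigh (n d : ℕ) : Submodule ℂ (Fin n → ℂ) :=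
  Submodule.span ℂ {v | ∃ i : Fin n, d ≤ i.val ∧ v = ee n i}

lemma Vhigh_apply_eq_zero {n d : ℕ} {v : Fin n → ℂ} (hv : v ∈ Vhigh n d)
    {i : Fin n} (hi : i.val < d) : v i = 0 := by
  have : Vhigh n d ≤ Submodule.comap (LinearMap.proj i : (Fin n → ℂ) →ₗ[ℂ] ℂ) ⊥ := by
    rw [Vhigh, Submodule.span_le]
    rintro v ⟨j, hj, rfl⟩
    simp only [SetLike.mem_coe, Submodule.mem_comap, Submodule.mem_bot, LinearMap.proj_apply]
    have : i ≠ j := by rintro rfl; omega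
    simp [ee, Pi.single_apply, this]
  simpa using this hv

theorem stmt1 (n d r : ℕ) (hd1 : 1 ≤ d) (hdn : d ≤ n - d) (hr : r ≤ d) :
    Submodule.span ℂ {w : ExteriorAlgebra ℂ (Fin n → ℂ) |
        ∃ (I : Finset (Fin n)) (hI : I.card = d), r < degS n d I ∧ w = vI n d I hI} =
    Submodule.span ℂ {w : ExteriorAlgebra ℂ (Fin n → ℂ) |
        ∃ z : Fin d → (Fin n → ℂ),
          (∃ s : Finset (Fin d), r + 1 ≤ s.card ∧ ∀ k ∈ s, z k ∈ Vhigh n d) ∧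
          w = ExteriorAlgebra.ιMulti ℂ d z} := by
  apply le_antisymm
  · -- easy direction: each v_I is a pure wedge of basis vectors
    apply Submodule.span_mono
    rintro w ⟨I, hI, hdeg, rfl⟩
    refine ⟨fun k => ee n (I.orderIsoOfFin hI k),
      ⟨Finset.univ.filter fun k => d ≤ (I.orderIsoOfFin hI k : Fin n).val, ?_, ?_⟩, rfl⟩
    · -- card of the pull-back filter equals degS
      have : (I.filter fun i : Fin n => d ≤ i.val).card =
          (Finset.univ.filter fun k : Fin d => d ≤ (I.orderIsoOfFin hI k : Fin n).val).card := by
        apply Finset.card_bij (fun (i : Fin n) (hi) =>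
          (I.orderIsoOfFin hI).symm ⟨i, (Finset.mem_filter.mp hi).1⟩)
        · intro i hi
          simp only [Finset.mem_filter, Finset.mem_univ, true_and]
          have := (Finset.mem_filter.mp hi).2
          simpa using this
        · intro a ha b hb h
          have : (⟨a, (Finset.mem_filter.mp ha).1⟩ : I) = ⟨b, (Finset.mem_filter.mp hb).1⟩ :=
            (I.orderIsoOfFin hI).symm.injective h
          exact Subtype.ext_iff.mp this
        · intro k hk
          refine ⟨(I.orderIsoOfFin hI k : Fin n), ?_, ?_⟩
          · simp only [Finset.mem_filter]
            exact ⟨(I.orderIsoOfFin hI k).2, (Finset.mem_filter.mp hk).2⟩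
          · rw [OrderIso.symm_apply_eq]
      rw [degS] at hdeg
      omega
    · intro k hk
      exact Submodule.subset_span ⟨_, (Finset.mem_filter.mp hk).2, rfl⟩
  · -- hard direction
    rw [Submodule.span_le]
    rintro w ⟨z, ⟨s, hs, hsV⟩, rfl⟩
    classical
    -- expand each z k in the standard basis
    have hz : z = fun k => ∑ i : Fin n, z k i • ee n i := by
      funext k
      rw [show (∑ i : Fin n, z k i • ee n i) = ∑ i : Fin n, Pi.single i (z k i) by
        refine Finset.sum_congr rfl fun i _ => ?_
        simp [ee, ← Pi.single_smul]]
      exact (Finset.univ_sum_single (z k)).symm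
    rw [hz]
    rw [show (ExteriorAlgebra.ιMulti ℂ d fun k => ∑ i : Fin n, z k i • ee n i) =
        ∑ f : Fin d → Fin n, ExteriorAlgebra.ιMulti ℂ d fun k => z k (f k) • ee n (f k) from
      (ExteriorAlgebra.ιMulti ℂ d).toMultilinearMap.map_sum (fun k i => z k i • ee n i)]
    apply Submodule.sum_mem
    intro f _
    rw [show (ExteriorAlgebra.ιMulti ℂ d fun k => z k (f k) • ee n (f k)) =
        (∏ k, z k (f k)) • ExteriorAlgebra.ιMulti ℂ d fun k => ee n (f k) from
      (ExteriorAlgebra.ιMulti ℂ d).toMultilinearMap.map_smul_univ (fun k => z k (f k))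
        (fun k => ee n (f k))]
    by_cases hc : ∏ k, z k (f k) = 0
    · rw [hc, zero_smul]; exact Submodule.zero_mem _
    · apply Submodule.smul_mem
      -- all factors nonzero; in particular for k ∈ s, d ≤ (f k).val
      have hfk : ∀ k ∈ s, d ≤ (f k).val := by
        intro k hk
        by_contra hlt
        exact hc (Finset.prod_eq_zero (Finset.mem_univ k)
          (Vhigh_apply_eq_zero (hsV k hk) (by omega)))
      by_cases hinj : Function.Injective f
      · -- I = image of f; get permutation
        set I : Finset (Fin n) := Finset.univ.image f with hIdef
        have hI : I.card = d := by
          rw [hIdef, Finset.card_image_of_injective _ hinj, Finset.card_univ, Fintype.card_fin]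
        have hmem : ∀ k, f k ∈ I := fun k => Finset.mem_image_of_mem f (Finset.mem_univ k)
        set σfun : Fin d → Fin d := fun k => (I.orderIsoOfFin hI).symm ⟨f k, hmem k⟩ with hσdef
        have hσinj : Function.Injective σfun := by
          intro a b h
          have : (⟨f a, hmem a⟩ : I) = ⟨f b, hmem b⟩ := (I.orderIsoOfFin hI).symm.injective h
          exact hinj (Subtype.ext_iff.mp this)
        have hσbij : Function.Bijective σfun := (Finite.injective_iff_bijective).mp hσinj
        let σ : Equiv.Perm (Fin d) := Equiv.ofBijective σfun hσbij
        have hfeq : ∀ k, (I.orderIsoOfFin hI (σ k) : Fin n) = f k := by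
          intro k
          show ((I.orderIsoOfFin hI) ((I.orderIsoOfFin hI).symm ⟨f k, hmem k⟩) : Fin n) = f k
          simp
        have hdeg : r < degS n d I := by
          have hsub : s.image f ⊆ I.filter fun i : Fin n => d ≤ i.val := by
            intro i hi
            obtain ⟨k, hk, rfl⟩ := Finset.mem_image.mp hi
            exact Finset.mem_filter.mpr ⟨hmem k, hfk k hk⟩
          have := Finset.card_le_card hsub
          rw [Finset.card_image_of_injective _ hinj] at this
          rw [degS]; omega
        have : (ExteriorAlgebra.ιMulti ℂ d fun k => ee n (f k)) =
            Equiv.Perm.sign σ • vI n d I hI := by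
          rw [vI]
          rw [show (fun k => ee n (f k)) =
            (fun k => ee n ((I.orderIsoOfFin hI) k : Fin n)) ∘ σ by
              funext k; simp [Function.comp, hfeq k]]
          exact (ExteriorAlgebra.ιMulti ℂ d).map_perm _ σ
        rw [this]
        exact Submodule.smul_mem _ _ (Submodule.subset_span ⟨I, hI, hdeg, rfl⟩)
      · -- f not injective: the wedge is zero
        have : ¬Function.Injective fun k => ee n (f k) := fun h =>
          hinj fun a b hab => h (congrArg (ee n) hab)
        rw [(ExteriorAlgebra.ιMulti ℂ d).map_eq_zero_of_not_injective _ this]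
        exact Submodule.zero_mem _
end

section
/- Let 0 ≤ r ≤ d and let g : ℂ^n → ℂ^n be a ℂ-linear map with g(V_{n−d}) ⊆ V_{n−d}. Then the induced linear map Λ^d g : Λ^d ℂ^n → Λ^d ℂ^n maps the subspace W_r = span{v_I : deg I > r} into itself. -/
/-- `W_r = span{v_I : deg I > r}`, as a subspace of the exterior algebra. -/
noncomputable def Wr (n d r : ℕ) : Submodule ℂ (ExteriorAlgebra ℂ (Fin n → ℂ)) :=
  Submodule.span ℂ {w | ∃ (I : Finset (Fin n)) (hI : I.card = d),
    r < degS n d I ∧ w = vI n d I hI}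

lemma Vhigh_coord {n d : ℕ} {v : Fin n → ℂ} (hv : v ∈ Vhigh n d) :
    ∀ i : Fin n, i.val < d → v i = 0 := by
  induction hv using Submodule.span_induction with
  | mem x hx =>
    obtain ⟨j, hj, rfl⟩ := hx
    intro i hi
    simp [ee, Pi.single_apply]
    intro h
    omega
  | zero => intro i _; rfl
  | add x y hx hy ihx ihy => intro i hi; simp [ihx i hi, ihy i hi]
  | smul c x hx ih => intro i hi; simp [ih i hi]

lemma ee_mem_Vhigh {n d : ℕ} {i : Fin n} (hi : d ≤ i.val) : ee n i ∈ Vhigh n d :=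
  Submodule.subset_span ⟨i, hi, rfl⟩

lemma wedge_mem_Wr {n d r : ℕ} (z : Fin d → (Fin n → ℂ)) (S : Finset (Fin d))
    (hS : r < S.card) (hz : ∀ k ∈ S, z k ∈ Vhigh n d) :
    ExteriorAlgebra.ιMulti ℂ d z ∈ Wr n d r := by
  have hzexp : z = fun k => ∑ i : Fin n, z k i • ee n i := by
    funext k; ext j
    simp [ee, Pi.single_apply, Finset.sum_apply]
  have key : ExteriorAlgebra.ιMulti ℂ d z
      = ∑ f : Fin d → Fin n, (∏ k, z k (f k)) •
        ExteriorAlgebra.ιMulti ℂ d (fun k => ee n (f k)) := by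
    conv_lhs => rw [hzexp]
    rw [show (ExteriorAlgebra.ιMulti ℂ d (M := Fin n → ℂ))
        (fun k => ∑ i : Fin n, z k i • ee n i)
      = (ExteriorAlgebra.ιMulti ℂ d (M := Fin n → ℂ)).toMultilinearMap
        (fun k => ∑ i : Fin n, z k i • ee n i) from rfl]
    rw [MultilinearMap.map_sum]
    refine Finset.sum_congr rfl fun f _ => ?_
    exact MultilinearMap.map_smul_univ _ (fun k => z k (f k)) (fun k => ee n (f k))
  rw [key]
  refine Submodule.sum_mem _ fun f _ => ?_
  by_cases hzero : ∃ k ∈ S, (f k).val < d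
  · obtain ⟨k, hk, hfk⟩ := hzero
    have : z k (f k) = 0 := Vhigh_coord (hz k hk) (f k) hfk
    rw [Finset.prod_eq_zero (Finset.mem_univ k) this, zero_smul]
    exact Submodule.zero_mem _
  · push_neg at hzero
    by_cases hinj : Function.Injective f
    · -- f injective: the wedge is ± v_J for J = image of f
      set J : Finset (Fin n) := Finset.univ.image f with hJdef
      have hJ : J.card = d := by
        rw [hJdef, Finset.card_image_of_injective _ hinj, Finset.card_univ, Fintype.card_fin]
      have hmemJ : ∀ k, f k ∈ J := fun k =>
        Finset.mem_image_of_mem f (Finset.mem_univ k)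
      have hdeg : r < degS n d J := by
        refine lt_of_lt_of_le hS ?_
        refine Finset.card_le_card_of_injOn f (fun k hk => ?_) hinj.injOn
        exact Finset.mem_filter.2 ⟨hmemJ k, hzero k hk⟩
      have hvJ : vI n d J hJ ∈ Wr n d r :=
        Submodule.subset_span ⟨J, hJ, hdeg, rfl⟩
      -- permutation relating f to the sorted enumeration
      have hbij : Function.Bijective
          (fun k => (J.orderIsoOfFin hJ).symm ⟨f k, hmemJ k⟩) := by
        rw [← Finite.injective_iff_bijective]
        intro a b hab
        have := congrArg (fun x => ((J.orderIsoOfFin hJ) x : Fin n)) hab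
        simp at this
        exact hinj this
      set σ : Equiv.Perm (Fin d) := Equiv.ofBijective _ hbij with hσ
      have hcomp : (fun k => ee n (f k))
          = (fun k => ee n (J.orderIsoOfFin hJ k)) ∘ σ := by
        funext k
        simp only [Function.comp_apply, hσ, Equiv.ofBijective_apply]
        congr 1
        simp
      rw [hcomp]
      rw [AlternatingMap.map_perm]
      rw [Units.smul_def]
      exact Submodule.smul_mem _ _ (zsmul_mem hvJ _)
    · -- f not injective: the wedge vanishes
      obtain ⟨a, b, hab, hne⟩ : ∃ a b, f a = f b ∧ a ≠ b := by
        simp only [Function.Injective, not_forall] at hinj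
        obtain ⟨a, b, h1, h2⟩ := hinj
        exact ⟨a, b, h1, h2⟩
      have : ExteriorAlgebra.ιMulti ℂ d (fun k => ee n (f k)) = 0 :=
        AlternatingMap.map_eq_zero_of_eq _ _ (by rw [hab]) hne
      rw [this, smul_zero]
      exact Submodule.zero_mem _

theorem stmt2 (n d r : ℕ) (hd1 : 1 ≤ d) (hdn : d ≤ n - d) (hr : r ≤ d)
    (g : (Fin n → ℂ) →ₗ[ℂ] (Fin n → ℂ)) (hg : ∀ v ∈ Vhigh n d, g v ∈ Vhigh n d) :
    (Wr n d r).map (ExteriorAlgebra.map g).toLinearMap ≤ Wr n d r := by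
  rw [Submodule.map_le_iff_le_comap, Wr, Submodule.span_le]
  rintro w ⟨I, hI, hdeg, rfl⟩
  simp only [SetLike.mem_coe, Submodule.mem_comap, AlgHom.toLinearMap_apply]
  rw [vI, ExteriorAlgebra.map_apply_ιMulti]
  refine wedge_mem_Wr _ (Finset.univ.filter fun k => d ≤ ((I.orderIsoOfFin hI k : Fin n)).val)
    ?_ ?_
  · have hcard : (Finset.univ.filter fun k => d ≤ ((I.orderIsoOfFin hI k : Fin n)).val).card
        = degS n d I := by
      rw [degS]
      refine Finset.card_bij (fun k _ => (I.orderIsoOfFin hI k : Fin n)) ?_ ?_ ?_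
      · intro k hk
        simp only [Finset.mem_filter, Finset.mem_univ, true_and] at hk
        exact Finset.mem_filter.2 ⟨(I.orderIsoOfFin hI k).2, hk⟩
      · intro a _ b _ hab
        exact (I.orderIsoOfFin hI).injective (Subtype.ext hab)
      · intro j hj
        obtain ⟨hjI, hjd⟩ := Finset.mem_filter.1 hj
        refine ⟨(I.orderIsoOfFin hI).symm ⟨j, hjI⟩, ?_, ?_⟩
        · simp only [Finset.mem_filter, Finset.mem_univ, true_and]
          simpa using hjd
        · simp
    exact hdeg.trans_le hcard.ge
  · intro k hk
    simp only [Finset.mem_filter, Finset.mem_univ, true_and] at hk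
    exact hg _ (ee_mem_Vhigh hk)
end

section
/- Let U ⊆ ℂ^n be a d-dimensional subspace, let s = dim(U ∩ V_{n−d}), let u_1,…,u_d be a basis of U, and write u_1 ∧ ⋯ ∧ u_d = Σ_I c_I v_I in the basis {v_I} of Λ^d ℂ^n. Then c_I = 0 for every d-element subset I with deg I < s, and there exists a d-element subset I with deg I = s and c_I ≠ 0. -/
/-
The coefficient `c I` is the minor of the matrix with rows `u k` on the columns `I` (a Plücker
coordinate of `U`), and it is nonzero exactly when every vector of `U` is determined by its
coordinates in `I`. In that case the vectors of `U ∩ V_{n-d}`, which vanish at the low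
coordinates, are determined by their coordinates in the high part of `I`, whence `s ≤ deg I`.
Conversely, pick `s` high coordinates determining `U ∩ V_{n-d}`; together with all low
coordinates they determine `U`, and any `d` of these coordinates that still determine `U` have
degree at most `s`, hence exactly `s`.
-/

open Module Matrix

section DeterminedOn

variable {K ι : Type*} [Field K]

def DeterminedOn (S : Submodule K (ι → K)) (T : Finset ι) : Prop :=
  ∀ x ∈ S, (∀ i ∈ T, x i = 0) → x = 0

namespace DeterminedOn

variable {S : Submodule K (ι → K)} {T : Finset ι}

lemma injective_pi_proj (h : DeterminedOn S T) :
    Function.Injective (LinearMap.pi fun i : T => (LinearMap.proj (i : ι)).comp S.subtype) := by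
  rw [← LinearMap.ker_eq_bot, LinearMap.ker_eq_bot']
  intro x hx
  exact Subtype.ext <| h x x.2 fun i hi => congrFun hx ⟨i, hi⟩

lemma finrank_le (h : DeterminedOn S T) : finrank K S ≤ T.card := by
  simpa using LinearMap.finrank_le_finrank_of_injective h.injective_pi_proj

lemma exists_erase [DecidableEq ι] (h : DeterminedOn S T) (hlt : finrank K S < T.card) :
    ∃ i ∈ T, DeterminedOn S (T.erase i) := by
  have : FiniteDimensional K S := Module.Finite.of_injective _ h.injective_pi_proj
  set φ : T → Dual K S := fun i => (LinearMap.proj (i : ι)).comp S.subtype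
  have hdep : ¬ LinearIndependent K φ := fun hli => by
    have := hli.fintype_card_le_finrank
    rw [Subspace.dual_finrank_eq, Fintype.card_coe] at this
    omega
  obtain ⟨g, hg, i₀, hi₀⟩ := Fintype.not_linearIndependent_iff.mp hdep
  -- the relation `∑ g j • φ j = 0` recovers the coordinate at `i₀` from the others
  refine ⟨i₀, i₀.2, fun x hx hzero => h x hx fun i hi => ?_⟩
  by_cases hii : i = i₀
  · subst hii
    have hev : ∑ j : T, g j * x j = 0 := by simpa [φ] using LinearMap.congr_fun hg ⟨x, hx⟩
    rw [Finset.sum_eq_single i₀ (fun j _ hj => by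
      rw [hzero j (Finset.mem_erase.mpr ⟨fun h' => hj (Subtype.ext h'), j.2⟩), mul_zero])
      (by simp)] at hev
    exact (mul_eq_zero.mp hev).resolve_left hi₀
  · exact hzero i (Finset.mem_erase.mpr ⟨hii, hi⟩)

lemma exists_subset_card_eq_finrank (h : DeterminedOn S T) :
    ∃ T' ⊆ T, T'.card = finrank K S ∧ DeterminedOn S T' := by
  classical
  induction T using Finset.strongInduction with
  | H T ih =>
    rcases h.finrank_le.eq_or_lt with heq | hlt
    · exact ⟨T, subset_rfl, heq.symm, h⟩
    · obtain ⟨i, hi, hi'⟩ := h.exists_erase hlt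
      obtain ⟨T', hsub, hcard, hT'⟩ := ih _ (Finset.erase_ssubset hi) hi'
      exact ⟨T', hsub.trans (Finset.erase_subset _ _), hcard, hT'⟩

lemma inf_pi_bot (p : ι → Prop) [DecidablePred p] (h : DeterminedOn S T) :
    DeterminedOn (S ⊓ Submodule.pi {i | ¬ p i} fun _ => ⊥) (T.filter p) := by
  intro x hx hzero
  refine h x hx.1 fun i hi => ?_
  by_cases hpi : p i
  · exact hzero i (Finset.mem_filter.mpr ⟨hi, hpi⟩)
  · simpa using (Submodule.mem_pi.mp hx.2) i hpi

end DeterminedOn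

lemma exists_determinedOn_card_filter [Fintype ι] (S : Submodule K (ι → K)) (p : ι → Prop)
    [DecidablePred p] :
    ∃ T : Finset ι, T.card = finrank K S ∧
      (T.filter p).card = finrank K ↥(S ⊓ Submodule.pi {i | ¬ p i} fun _ => ⊥) ∧
      DeterminedOn S T := by
  classical
  have hW : DeterminedOn (S ⊓ Submodule.pi {i | ¬ p i} fun _ => ⊥) (Finset.univ.filter p) :=
    DeterminedOn.inf_pi_bot p fun x _ hx => funext fun i => hx i (Finset.mem_univ i)
  obtain ⟨P, -, hPcard, hP⟩ := hW.exists_subset_card_eq_finrank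
  have hS : DeterminedOn S (Finset.univ.filter (¬ p ·) ∪ P) := by
    intro x hx hzero
    refine hP x ⟨hx, Submodule.mem_pi.mpr fun i hi => ?_⟩
      fun i hi => hzero i (Finset.mem_union_right _ hi)
    exact (Submodule.mem_bot K).mpr <|
      hzero i (Finset.mem_union_left _ (Finset.mem_filter.mpr ⟨Finset.mem_univ i, hi⟩))
  obtain ⟨T, hTsub, hTcard, hT⟩ := hS.exists_subset_card_eq_finrank
  refine ⟨T, hTcard, le_antisymm ?_ (hT.inf_pi_bot p).finrank_le, hT⟩
  rw [← hPcard]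
  refine Finset.card_le_card fun i hi => ?_
  obtain ⟨hiT, hpi⟩ := Finset.mem_filter.mp hi
  rcases Finset.mem_union.mp (hTsub hiT) with hlow | hP
  · exact absurd hpi (Finset.mem_filter.mp hlow).2
  · exact hP

lemma det_ne_zero_iff_determinedOn {m : Type*} [Fintype m] [DecidableEq m] {u : m → ι → K}
    (hu : LinearIndependent K u) {T : Finset ι} (e : m ≃ T) :
    (Matrix.of fun k l => u k (e l)).det ≠ 0 ↔
      DeterminedOn (Submodule.span K (Set.range u)) T := by
  have hvecMul (g : m → K) :
      g ᵥ* Matrix.of (fun k l => u k (e l)) = fun l => (∑ k, g k • u k) (e l) := by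
    ext l
    simp [Matrix.vecMul, dotProduct, Finset.sum_apply]
  rw [Ne, ← Matrix.exists_vecMul_eq_zero_iff, not_exists]
  constructor
  · intro h x hx hzero
    obtain ⟨g, rfl⟩ := (Submodule.mem_span_range_iff_exists_fun K).mp hx
    obtain rfl : g = 0 := by
      by_contra hg
      exact h g ⟨hg, by rw [hvecMul]; exact funext fun l => hzero _ (e l).2⟩
    simp
  · rintro h g ⟨hg, hgM⟩
    have hsum : ∑ k, g k • u k = 0 := by
      refine h _ (Submodule.sum_mem _ fun k _ =>
        Submodule.smul_mem _ _ (Submodule.subset_span ⟨k, rfl⟩)) fun i hi => ?_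
      simpa [hvecMul] using congrFun hgM (e.symm ⟨i, hi⟩)
    exact hg (funext (Fintype.linearIndependent_iff.mp hu g hsum))

end DeterminedOn

section Coefficients

open exteriorPower

lemma vI_eq_ιMulti_family {n d : ℕ} (I : Finset (Fin n)) (hI : I.card = d) :
    vI n d I hI = ExteriorAlgebra.ιMulti_family ℂ d (Pi.basisFun ℂ (Fin n)) ⟨I, hI⟩ := by
  rw [vI, ExteriorAlgebra.ιMulti_family]
  congr
  ext k : 1
  simp [ee, Set.powersetCard.ofFinEmbEquiv_symm_apply]

lemma coeff_eq_det {n d : ℕ} {u : Fin d → Fin n → ℂ}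
    {c : {I : Finset (Fin n) // I.card = d} → ℂ}
    (hc : ExteriorAlgebra.ιMulti ℂ d u =
      ∑ I : {I : Finset (Fin n) // I.card = d}, c I • vI n d I.1 I.2)
    (I : {I : Finset (Fin n) // I.card = d}) :
    c I = (Matrix.of fun k l => u k (I.1.orderIsoOfFin I.2 l)).det := by
  set b := Pi.basisFun ℂ (Fin n)
  -- the `I`-th coordinate of the basis `(v_J)` of `⋀^d`, extended by zero to the other degrees
  set φ := ExteriorAlgebra.liftAlternating (Function.update 0 d
    ((ιMultiDual ℂ d b ⟨I.1, I.2⟩).compAlternatingMap (ιMulti ℂ d)))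
  have hφ (v : Fin d → Fin n → ℂ) :
      φ (ExteriorAlgebra.ιMulti ℂ d v) = ιMultiDual ℂ d b ⟨I.1, I.2⟩ (ιMulti ℂ d v) := by
    simp [φ, ExteriorAlgebra.liftAlternating_apply_ιMulti]
  have hvI (J : {I : Finset (Fin n) // I.card = d}) :
      φ (vI n d J.1 J.2) = if J = I then 1 else 0 := by
    rw [vI_eq_ιMulti_family, ExteriorAlgebra.ιMulti_family, hφ]
    split_ifs with h
    · subst h; exact ιMultiDual_apply_diag ℂ d b ⟨J.1, J.2⟩
    · exact ιMultiDual_apply_nondiag ℂ d b _ ⟨J.1, J.2⟩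
        fun h' => h (Subtype.ext (congrArg Subtype.val h').symm)
  have hcoord := congrArg φ hc
  simp only [map_sum, map_smul, hvI, smul_eq_mul, mul_ite, mul_one, mul_zero,
    Finset.sum_ite_eq', Finset.mem_univ, if_true, hφ, ιMultiDual_apply_ιMulti] at hcoord
  rw [← hcoord]
  simp [b, Set.powersetCard.ofFinEmbEquiv_symm_apply]

end Coefficients

lemma Vhigh_eq_pi (n d : ℕ) : Vhigh n d = Submodule.pi {i | ¬ d ≤ i.val} fun _ => ⊥ := by
  classical
  refine le_antisymm (Submodule.span_le.mpr ?_) fun x hx => ?_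
  · rintro _ ⟨i, hi, rfl⟩
    refine Submodule.mem_pi.mpr fun j hj => (Submodule.mem_bot ℂ).mpr ?_
    exact Pi.single_eq_of_ne (fun h : j = i => hj (h ▸ hi)) 1
  · rw [pi_eq_sum_univ' x]
    refine Submodule.sum_mem _ fun j _ => ?_
    by_cases hj : d ≤ j.val
    · exact Submodule.smul_mem _ _ (Submodule.subset_span ⟨j, hj, rfl⟩)
    · rw [(Submodule.mem_bot ℂ).mp (Submodule.mem_pi.mp hx j hj), zero_smul]
      exact Submodule.zero_mem _

theorem stmt5_general (n d : ℕ)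
    (U : Submodule ℂ (Fin n → ℂ)) (hU : Module.finrank ℂ U = d)
    (u : Fin d → (Fin n → ℂ)) (hmem : ∀ k, u k ∈ U) (hli : LinearIndependent ℂ u)
    (c : {I : Finset (Fin n) // I.card = d} → ℂ)
    (hc : ExteriorAlgebra.ιMulti ℂ d u =
      ∑ I : {I : Finset (Fin n) // I.card = d}, c I • vI n d I.1 I.2) :
    (∀ I : {I : Finset (Fin n) // I.card = d},
        degS n d I.1 < Module.finrank ℂ ↥(U ⊓ Vhigh n d) → c I = 0) ∧
    ∃ I : {I : Finset (Fin n) // I.card = d},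
        degS n d I.1 = Module.finrank ℂ ↥(U ⊓ Vhigh n d) ∧ c I ≠ 0 := by
  have hspan : Submodule.span ℂ (Set.range u) = U :=
    Submodule.eq_of_le_of_finrank_eq (Submodule.span_le.mpr (Set.range_subset_iff.mpr hmem))
      (by rw [finrank_span_eq_card hli, Fintype.card_fin, hU])
  have hcoeff (I : {I : Finset (Fin n) // I.card = d}) : c I ≠ 0 ↔ DeterminedOn U I.1 := by
    rw [coeff_eq_det hc, ← hspan]
    exact det_ne_zero_iff_determinedOn hli (I.1.orderIsoOfFin I.2).toEquiv
  rw [Vhigh_eq_pi]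
  refine ⟨fun I hlt => ?_, ?_⟩
  · by_contra hI
    exact hlt.not_ge (((hcoeff I).mp hI).inf_pi_bot fun i : Fin n => d ≤ i.val).finrank_le
  · obtain ⟨T, hTcard, hTdeg, hT⟩ :=
      exists_determinedOn_card_filter U fun i : Fin n => d ≤ i.val
    rw [hU] at hTcard
    exact ⟨⟨T, hTcard⟩, hTdeg, (hcoeff _).mpr hT⟩

theorem stmt5 (n d : ℕ) (hd1 : 1 ≤ d) (hdn : d ≤ n - d)
    (U : Submodule ℂ (Fin n → ℂ)) (hU : Module.finrank ℂ U = d)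
    (u : Fin d → (Fin n → ℂ)) (hmem : ∀ k, u k ∈ U) (hli : LinearIndependent ℂ u)
    (c : {I : Finset (Fin n) // I.card = d} → ℂ)
    (hc : ExteriorAlgebra.ιMulti ℂ d u =
      ∑ I : {I : Finset (Fin n) // I.card = d}, c I • vI n d I.1 I.2) :
    (∀ I : {I : Finset (Fin n) // I.card = d},
        degS n d I.1 < Module.finrank ℂ ↥(U ⊓ Vhigh n d) → c I = 0) ∧
    ∃ I : {I : Finset (Fin n) // I.card = d},
        degS n d I.1 = Module.finrank ℂ ↥(U ⊓ Vhigh n d) ∧ c I ≠ 0 :=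
  stmt5_general n d U hU u hmem hli c hc
end

section
/- Let 2 ≤ r ≤ d and let U, U′ be d-dimensional subspaces of ℂ^n with dim(U ∩ V_{n−d}) ≤ r−2 and dim(U′ ∩ V_{n−d}) ≤ r−2. Let ω = u_1 ∧ ⋯ ∧ u_d and ω′ = u′_1 ∧ ⋯ ∧ u′_d for bases u of U and u′ of U′, and write ω = Σ_I c_I v_I, ω′ = Σ_I c′_I v_I in the basis {v_I}. If there exists a nonzero λ ∈ ℂ such that c_I = λ·c′_I for every d-element subset I with deg I ≤ r−1, then U = U′. -/
/-!
The coefficient `c_I` of `u₁ ∧ ⋯ ∧ u_d` is the Plücker coordinate `p_I(u)`, the `d × d` minor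
of the matrix with rows `u` on the columns `I`. If `p_{I₀}(u) ≠ 0`, then `span u` is cut out by
the linear forms `v ↦ p_{I₀ ∪ {j}}(v, u)` for `j ∉ I₀`; by Laplace expansion the coefficients of
these forms are coordinates `p_I(u)` with `I ⊆ I₀ ∪ {j}`, hence of degree at most `deg I₀ + 1`.
Since `U ∩ V_{n-d}` has dimension at most `r - 2`, the first `d` columns of the matrix have rank
at least `d - (r - 2)`, so a column basis can be chosen with at most `r - 2` columns beyond
the `d`-th: this gives `I₀` with `deg I₀ ≤ r - 2` and `p_{I₀}(u) ≠ 0`. Then `p_{I₀}(u') ≠ 0`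
as well, and `U`, `U'` are cut out by proportional forms.
-/

open Finset Module Submodule

section LinearAlgebra

variable {K V ι : Type*} [Field K] [AddCommGroup V] [Module K V]

theorem span_range_eq_of_finrank_eq {m : ℕ} {u : Fin m → V} (hu : LinearIndependent K u)
    {U : Submodule K V} [FiniteDimensional K U] (hmem : ∀ k, u k ∈ U) (hU : finrank K U = m) :
    span K (Set.range u) = U :=
  eq_of_le_of_finrank_le (span_le.mpr (Set.range_subset_iff.mpr hmem))
    (by rw [hU, finrank_span_eq_card hu, Fintype.card_fin])

theorem finrank_map_add_finrank_inf_ker {V₂ : Type*} [AddCommGroup V₂] [Module K V₂]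
    (f : V →ₗ[K] V₂) (W : Submodule K V) [FiniteDimensional K W] :
    finrank K (W.map f) + finrank K ↥(W ⊓ LinearMap.ker f) = finrank K W := by
  have := (f.domRestrict W).finrank_range_add_finrank_ker
  rwa [LinearMap.range_domRestrict, LinearMap.ker_domRestrict, ← finrank_map_subtype_eq,
    map_comap_subtype] at this

theorem LinearIndepOn.finrank_span_image_eq_card {v : ι → V} {S : Finset ι}
    (h : LinearIndepOn K v (S : Set ι)) : finrank K (span K (v '' S)) = #S := by
  rw [Set.image_eq_range, finrank_span_eq_card h.linearIndependent]
  simp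

theorem exists_linearIndepOn_card_filter_le [Fintype ι] [FiniteDimensional K V] {v : ι → V}
    (hv : span K (Set.range v) = ⊤) (p : ι → Prop) [DecidablePred p] :
    ∃ S : Finset ι, LinearIndepOn K v (S : Set ι) ∧ #S = finrank K V ∧
      #(S.filter p) ≤ finrank K V - finrank K (span K (v '' {i | ¬ p i})) := by
  classical
  obtain ⟨S₀, hS₀L, -, hLS₀, hS₀⟩ :=
    exists_linearIndepOn_extension (linearIndepOn_empty K v) (Set.empty_subset {i | ¬ p i})
  obtain ⟨S, -, hS₀S, hS, hSind⟩ := exists_linearIndepOn_extension hS₀ (Set.subset_univ S₀)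
  lift S to Finset ι using Set.toFinite S
  lift S₀ to Finset ι using Set.toFinite S₀
  have hcard : #S = finrank K V := by
    have htop : span K (v '' S) = ⊤ := by
      rw [eq_top_iff, ← hv, ← Set.image_univ]
      exact span_le.mpr hS
    rw [← hSind.finrank_span_image_eq_card, htop, finrank_top]
  have hcard₀ : finrank K (span K (v '' {i | ¬ p i})) = #S₀ := by
    rw [← hS₀.finrank_span_image_eq_card,
      le_antisymm (span_le.mpr hLS₀) (span_mono (Set.image_mono hS₀L))]
  refine ⟨S, hSind, hcard, ?_⟩
  rw [hcard₀, ← hcard, ← card_sdiff_of_subset (coe_subset.mp hS₀S)]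
  refine card_le_card fun i hi => mem_sdiff.mpr ⟨(mem_filter.mp hi).1, fun hi₀ => ?_⟩
  exact hS₀L hi₀ (mem_filter.mp hi).2

end LinearAlgebra

namespace Finset

variable {α : Type*} [LinearOrder α] {m : ℕ}

theorem card_insert_eq_succ {I : Finset α} (hI : #I = m) {j : α} (hj : j ∉ I) :
    #(insert j I) = m + 1 := by
  rw [card_insert_of_notMem hj, hI]

theorem card_erase_orderEmbOfFin (J : Finset α) (hJ : #J = m + 1) (j : Fin (m + 1)) :
    #(J.erase (J.orderEmbOfFin hJ j)) = m := by
  rw [card_erase_of_mem (J.orderEmbOfFin_mem hJ j), hJ, Nat.add_sub_cancel]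

theorem orderEmbOfFin_succAbove (J : Finset α) (hJ : #J = m + 1) (j : Fin (m + 1)) (k : Fin m) :
    J.orderEmbOfFin hJ (j.succAbove k) =
      (J.erase (J.orderEmbOfFin hJ j)).orderEmbOfFin (card_erase_orderEmbOfFin J hJ j) k := by
  refine congrFun (orderEmbOfFin_unique _ (fun k => ?_)
    ((J.orderEmbOfFin hJ).strictMono.comp (Fin.strictMono_succAbove j))) k
  exact mem_erase.mpr ⟨fun h => j.succAbove_ne k ((J.orderEmbOfFin hJ).injective h),
    J.orderEmbOfFin_mem hJ _⟩

end Finset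

namespace Plucker

variable {K : Type*} [Field K] {n m : ℕ}

noncomputable def coord (u : Fin m → Fin n → K) (J : Finset (Fin n)) (hJ : #J = m) : K :=
  (Matrix.of fun l k => u l (J.orderEmbOfFin hJ k)).det

noncomputable def coordForm (J : Finset (Fin n)) (hJ : #J = m) :
    (Fin n → K) [⋀^Fin m]→ₗ[K] K :=
  Matrix.detRowAlternating.compLinearMap (LinearMap.funLeft K K (J.orderEmbOfFin hJ))

theorem coordForm_apply (J : Finset (Fin n)) (hJ : #J = m) (u : Fin m → Fin n → K) :
    coordForm J hJ u = coord u J hJ := rfl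

noncomputable def coordFunctional (J : Finset (Fin n)) :
    ExteriorAlgebra K (Fin n → K) →ₗ[K] K :=
  ExteriorAlgebra.liftAlternating fun i => if h : #J = i then coordForm J h else 0

theorem coordFunctional_ιMulti (J : Finset (Fin n)) (hJ : #J = m) (u : Fin m → Fin n → K) :
    coordFunctional J (ExteriorAlgebra.ιMulti K m u) = coord u J hJ := by
  rw [coordFunctional, ExteriorAlgebra.liftAlternating_apply_ιMulti, dif_pos hJ, coordForm_apply]

theorem coord_single (I J : Finset (Fin n)) (hI : #I = m) (hJ : #J = m) :
    coord (fun k => Pi.single (I.orderEmbOfFin hI k) (1 : K)) J hJ = if I = J then 1 else 0 := by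
  split_ifs with hIJ
  · subst hIJ
    rw [coord, ← Matrix.det_one (R := K) (n := Fin m)]
    congr
    ext l k
    simp [Matrix.one_apply, Pi.single_apply, eq_comm]
  · obtain ⟨x, hxI, hxJ⟩ : ∃ x ∈ I, x ∉ J := not_subset.mp fun h =>
      hIJ (eq_of_subset_of_card_le h (hJ.trans hI.symm).le)
    obtain ⟨l, rfl⟩ : x ∈ Set.range (I.orderEmbOfFin hI) := by rwa [range_orderEmbOfFin]
    refine Matrix.det_eq_zero_of_row_eq_zero l fun k => ?_
    simp only [Matrix.of_apply, Pi.single_apply]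
    exact if_neg fun h : J.orderEmbOfFin hJ k = I.orderEmbOfFin hI l =>
      hxJ (h ▸ J.orderEmbOfFin_mem hJ k)

theorem coord_ne_zero_of_linearIndepOn_col {u : Fin m → Fin n → K} {I : Finset (Fin n)}
    (hI : #I = m) (h : LinearIndepOn K (Matrix.of u).col (I : Set (Fin n))) :
    coord u I hI ≠ 0 := by
  rw [coord, ← Matrix.det_transpose]
  refine ((Matrix.isUnit_iff_isUnit_det _).mp
    (Matrix.linearIndependent_rows_iff_isUnit.mp ?_)).ne_zero
  have hinj : Function.Injective fun k => (⟨I.orderEmbOfFin hI k, I.orderEmbOfFin_mem hI k⟩ : I) :=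
    fun k k' hk => (I.orderEmbOfFin hI).injective (congrArg Subtype.val hk)
  exact h.linearIndependent.comp _ hinj

theorem exists_coord_ne_zero_of_finrank_inf_ker_le {d s : ℕ} (hdn : d ≤ n)
    {u : Fin d → Fin n → K} (hu : LinearIndependent K u)
    (hs : finrank K ↥(span K (Set.range u) ⊓
      LinearMap.ker (LinearMap.funLeft K K (Fin.castLE hdn))) ≤ s) :
    ∃ (I : Finset (Fin n)) (hI : #I = d), degS n d I ≤ s ∧ coord u I hI ≠ 0 := by
  set A := Matrix.of u
  have hspan : span K (Set.range A.col) = ⊤ := by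
    refine eq_top_of_finrank_eq ?_
    rw [← Matrix.rank_eq_finrank_span_cols, LinearIndependent.rank_matrix (M := A) hu,
      Module.finrank_fin_fun, Fintype.card_fin]
  -- column rank = row rank for the first `d` columns of `A`, whose rows are the projected `u`
  have hlow : d - s ≤ finrank K (span K (A.col '' {i | ¬ d ≤ i.val})) := by
    set C := A.submatrix id (Fin.castLE hdn)
    have hcol : A.col '' {i | ¬ d ≤ i.val} = Set.range C.col := by
      ext x
      exact ⟨fun ⟨i, hi, hx⟩ => ⟨⟨i, not_le.mp hi⟩, hx⟩,
        fun ⟨k, hk⟩ => ⟨_, not_le.mpr k.isLt, hk⟩⟩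
    have hrow : Set.range C.row = LinearMap.funLeft K K (Fin.castLE hdn) '' Set.range u := by
      rw [← Set.range_comp]
      rfl
    have := finrank_map_add_finrank_inf_ker (LinearMap.funLeft K K (Fin.castLE hdn))
      (span K (Set.range u))
    rw [finrank_span_eq_card hu, Fintype.card_fin, ← span_image, ← hrow,
      ← Matrix.rank_eq_finrank_span_row, Matrix.rank_eq_finrank_span_cols] at this
    rw [hcol]
    omega
  obtain ⟨I, hIind, hIcard, hIdeg⟩ := exists_linearIndepOn_card_filter_le hspan (d ≤ ·.val)
  rw [Module.finrank_fin_fun] at hIcard hIdeg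
  exact ⟨I, hIcard, by rw [degS]; omega, coord_ne_zero_of_linearIndepOn_col hIcard hIind⟩

noncomputable def cofactor (u : Fin m → Fin n → K) (J : Finset (Fin n)) (hJ : #J = m + 1) :
    (Fin n → K) →ₗ[K] K :=
  (coordForm J hJ).toMultilinearMap.toLinearMap (Fin.cons 0 u) 0

theorem cofactor_apply (u : Fin m → Fin n → K) (J : Finset (Fin n)) (hJ : #J = m + 1)
    (v : Fin n → K) : cofactor u J hJ v = coord (Fin.cons v u) J hJ := by
  rw [cofactor, MultilinearMap.toLinearMap_apply, Fin.update_cons_zero]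
  rfl

theorem cofactor_apply_eq_sum (u : Fin m → Fin n → K) (J : Finset (Fin n)) (hJ : #J = m + 1)
    (v : Fin n → K) :
    cofactor u J hJ v = ∑ j : Fin (m + 1), (-1) ^ (j : ℕ) * v (J.orderEmbOfFin hJ j) *
      coord u (J.erase (J.orderEmbOfFin hJ j)) (card_erase_orderEmbOfFin J hJ j) := by
  rw [cofactor_apply, coord, Matrix.det_succ_row_zero]
  refine sum_congr rfl fun j _ => ?_
  simp only [coord, Matrix.of_apply, Fin.cons_zero, Matrix.submatrix, Fin.cons_succ,
    orderEmbOfFin_succAbove]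

theorem cofactor_eq_zero_of_mem_span {u : Fin m → Fin n → K} (J : Finset (Fin n))
    (hJ : #J = m + 1) {v : Fin n → K} (hv : v ∈ span K (Set.range u)) :
    cofactor u J hJ v = 0 := by
  rw [cofactor_apply, ← coordForm_apply]
  exact (coordForm J hJ).map_linearDependent _ fun h => (linearIndependent_finCons.mp h).2 hv

theorem cofactor_eq_smul_of_coord_eq {u u' : Fin m → Fin n → K} {J : Finset (Fin n)}
    (hJ : #J = m + 1) {a : K} (h : ∀ I ⊆ J, ∀ hI : #I = m, coord u I hI = a * coord u' I hI) :
    cofactor u J hJ = a • cofactor u' J hJ := by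
  refine LinearMap.ext fun v => ?_
  rw [LinearMap.smul_apply, cofactor_apply_eq_sum, cofactor_apply_eq_sum, smul_eq_mul, mul_sum]
  refine sum_congr rfl fun j _ => ?_
  rw [h _ (erase_subset _ _)]
  ring

theorem cofactor_insert_apply_of_eqOn_zero (u : Fin m → Fin n → K) {I : Finset (Fin n)}
    (hI : #I = m) {j : Fin n} (hj : j ∉ I) {v : Fin n → K} (hv : ∀ i ∈ I, v i = 0) :
    ∃ k : ℕ, cofactor u (insert j I) (card_insert_eq_succ hI hj) v =
      (-1) ^ k * v j * coord u I hI := by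
  set J := insert j I
  have hJ : #J = m + 1 := card_insert_eq_succ hI hj
  obtain ⟨k, hk⟩ : j ∈ Set.range (J.orderEmbOfFin hJ) := by simp [J]
  refine ⟨k, ?_⟩
  rw [cofactor_apply_eq_sum, sum_eq_single k]
  · simp only [hk, J, erase_insert hj]
  · intro k' _ hk'
    have : J.orderEmbOfFin hJ k' ∈ I := by
      refine (mem_insert.mp (J.orderEmbOfFin_mem hJ k')).resolve_left fun h => hk' ?_
      exact (J.orderEmbOfFin hJ).injective (h.trans hk.symm)
    rw [hv _ this, mul_zero, zero_mul]
  · simp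

theorem span_eq_iInf_ker_cofactor {u : Fin m → Fin n → K} (hu : LinearIndependent K u)
    {I : Finset (Fin n)} (hI : #I = m) (hIu : coord u I hI ≠ 0) :
    span K (Set.range u) = ⨅ (j : Fin n) (hj : j ∉ I),
      LinearMap.ker (cofactor u (insert j I) (card_insert_eq_succ hI hj)) := by
  set W := ⨅ (j : Fin n) (hj : j ∉ I),
    LinearMap.ker (cofactor u (insert j I) (card_insert_eq_succ hI hj))
  have hle : span K (Set.range u) ≤ W :=
    le_iInf₂ fun j hj v hv => cofactor_eq_zero_of_mem_span _ _ hv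
  -- a vector of `W` is determined by its coordinates in `I`
  have hrestrict :
      Function.Injective ((LinearMap.funLeft K K ((↑) : I → Fin n)).domRestrict W) := by
    refine (injective_iff_map_eq_zero _).mpr fun ⟨v, hv⟩ hv0 => Subtype.ext (funext fun j => ?_)
    have hvI : ∀ i ∈ I, v i = 0 := fun i hi => congrFun hv0 ⟨i, hi⟩
    by_cases hj : j ∈ I
    · exact hvI j hj
    obtain ⟨k, hk⟩ := cofactor_insert_apply_of_eqOn_zero u hI hj hvI
    rw [LinearMap.mem_ker.mp ((mem_iInf _).mp ((mem_iInf _).mp hv j) hj)] at hk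
    simpa [hIu] using hk.symm
  refine eq_of_le_of_finrank_le hle ?_
  calc finrank K W ≤ finrank K (I → K) := LinearMap.finrank_le_finrank_of_injective hrestrict
    _ = finrank K (span K (Set.range u)) := by
      rw [finrank_span_eq_card hu, Module.finrank_fintype_fun_eq_card, Fintype.card_coe, hI,
        Fintype.card_fin]

end Plucker

open Plucker

theorem coeff_eq_coord {n d : ℕ} (u : Fin d → Fin n → ℂ)
    (c : {I : Finset (Fin n) // #I = d} → ℂ)
    (hc : ExteriorAlgebra.ιMulti ℂ d u =
      ∑ I : {I : Finset (Fin n) // #I = d}, c I • vI n d I.1 I.2)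
    (I : {I : Finset (Fin n) // #I = d}) : c I = coord u I.1 I.2 := by
  have hv : ∀ J : {I : Finset (Fin n) // #I = d},
      coordFunctional I.1 (vI n d J.1 J.2) = if J = I then 1 else 0 := fun J => by
    rw [vI, coordFunctional_ιMulti I.1 I.2]
    simp [ee, coord_single, Subtype.ext_iff]
  simpa [coordFunctional_ιMulti I.1 I.2, map_sum, hv] using (congrArg (coordFunctional I.1) hc).symm

theorem Vhigh_eq_ker_funLeft {n d : ℕ} (hdn : d ≤ n) :
    Vhigh n d = LinearMap.ker (LinearMap.funLeft ℂ ℂ (Fin.castLE hdn)) := by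
  refine le_antisymm (span_le.mpr ?_) fun v hv => ?_
  · rintro _ ⟨i, hi, rfl⟩
    refine funext fun k => Pi.single_eq_of_ne (fun h => ?_) _
    have := congrArg Fin.val h
    simp only [Fin.val_castLE] at this
    omega
  · rw [pi_eq_sum_univ' v]
    refine sum_mem fun i _ => ?_
    by_cases hi : d ≤ i.val
    · exact smul_mem _ _ (subset_span ⟨i, hi, rfl⟩)
    · rw [show v i = 0 from congrFun hv ⟨i, not_le.mp hi⟩, zero_smul]
      exact zero_mem _

theorem degS_le_of_subset_insert {n d : ℕ} {I J : Finset (Fin n)} {j : Fin n}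
    (h : I ⊆ insert j J) : degS n d I ≤ degS n d J + 1 := by
  refine (card_le_card (filter_subset_filter _ h)).trans ?_
  rw [filter_insert]
  split_ifs
  exacts [card_insert_le _ _, Nat.le_succ _]

theorem stmt6_general (n d r : ℕ) (hdn : d ≤ n - d) (hr2 : 2 ≤ r)
    (U U' : Submodule ℂ (Fin n → ℂ))
    (hU : Module.finrank ℂ U = d) (hU' : Module.finrank ℂ U' = d)
    (hUV : Module.finrank ℂ ↥(U ⊓ Vhigh n d) ≤ r - 2)
    (u u' : Fin d → (Fin n → ℂ))
    (hmem : ∀ k, u k ∈ U) (hli : LinearIndependent ℂ u)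
    (hmem' : ∀ k, u' k ∈ U') (hli' : LinearIndependent ℂ u')
    (c c' : {I : Finset (Fin n) // I.card = d} → ℂ)
    (hc : ExteriorAlgebra.ιMulti ℂ d u =
      ∑ I : {I : Finset (Fin n) // I.card = d}, c I • vI n d I.1 I.2)
    (hc' : ExteriorAlgebra.ιMulti ℂ d u' =
      ∑ I : {I : Finset (Fin n) // I.card = d}, c' I • vI n d I.1 I.2)
    (hprop : ∃ lam : ℂ, lam ≠ 0 ∧ ∀ I : {I : Finset (Fin n) // I.card = d},
      degS n d I.1 ≤ r - 1 → c I = lam * c' I) :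
    U = U' := by
  obtain ⟨lam, hlam, hcc'⟩ := hprop
  have hdn' : d ≤ n := hdn.trans (Nat.sub_le n d)
  have hcoord : ∀ I hI, degS n d I ≤ r - 1 → coord u I hI = lam * coord u' I hI :=
    fun I hI hdeg => by
      rw [← coeff_eq_coord u c hc ⟨I, hI⟩, ← coeff_eq_coord u' c' hc' ⟨I, hI⟩, hcc' _ hdeg]
  rw [← span_range_eq_of_finrank_eq hli hmem hU, Vhigh_eq_ker_funLeft hdn'] at hUV
  obtain ⟨I, hI, hIdeg, hIu⟩ := exists_coord_ne_zero_of_finrank_inf_ker_le hdn' hli hUV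
  have hIu' : coord u' I hI ≠ 0 := fun h => hIu (by rw [hcoord I hI (by omega), h, mul_zero])
  rw [← span_range_eq_of_finrank_eq hli hmem hU, ← span_range_eq_of_finrank_eq hli' hmem' hU',
    span_eq_iInf_ker_cofactor hli hI hIu, span_eq_iInf_ker_cofactor hli' hI hIu']
  refine iInf_congr fun j => iInf_congr fun hj => ?_
  rw [cofactor_eq_smul_of_coord_eq _ fun J hJ hJcard => hcoord J hJcard ?_,
    LinearMap.ker_smul _ _ hlam]
  have := degS_le_of_subset_insert (d := d) hJ
  omega

theorem stmt6 (n d r : ℕ) (hd1 : 1 ≤ d) (hdn : d ≤ n - d) (hr2 : 2 ≤ r) (hrd : r ≤ d)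
    (U U' : Submodule ℂ (Fin n → ℂ))
    (hU : Module.finrank ℂ U = d) (hU' : Module.finrank ℂ U' = d)
    (hUV : Module.finrank ℂ ↥(U ⊓ Vhigh n d) ≤ r - 2)
    (hUV' : Module.finrank ℂ ↥(U' ⊓ Vhigh n d) ≤ r - 2)
    (u u' : Fin d → (Fin n → ℂ))
    (hmem : ∀ k, u k ∈ U) (hli : LinearIndependent ℂ u)
    (hmem' : ∀ k, u' k ∈ U') (hli' : LinearIndependent ℂ u')
    (c c' : {I : Finset (Fin n) // I.card = d} → ℂ)
    (hc : ExteriorAlgebra.ιMulti ℂ d u =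
      ∑ I : {I : Finset (Fin n) // I.card = d}, c I • vI n d I.1 I.2)
    (hc' : ExteriorAlgebra.ιMulti ℂ d u' =
      ∑ I : {I : Finset (Fin n) // I.card = d}, c' I • vI n d I.1 I.2)
    (hprop : ∃ lam : ℂ, lam ≠ 0 ∧ ∀ I : {I : Finset (Fin n) // I.card = d},
      degS n d I.1 ≤ r - 1 → c I = lam * c' I) :
    U = U' :=
  stmt6_general n d r hdn hr2 U U' hU hU' hUV u u' hmem hli hmem' hli' c c' hc hc' hprop
end

section
/- Assume 0 ≤ r ≤ m. Then the set {φ ∈ Hom_ℂ(p_J, C_J) : dim(U_φ ∩ V_{n−d}) ≥ r} is in bijection with the product {X ∈ Mat_{m×m}(ℂ) : rank X ≤ m−r} × ℂ^{d(n−d)−m²}, via the map sending φ to the pair consisting of X_φ and the tuple of the remaining d(n−d)−m² matrix entries a_{i,j} of φ (those with (i,j) not indexing an entry of X_φ). -/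
/-- The columns of `X_φ`: the set `J_{>d}` (0-indexed: elements of `J` with value `≥ d`). -/
def colsF (n d : ℕ) (J : Finset (Fin n)) : Finset (Fin n) :=
  J.filter fun j : Fin n => d ≤ j.val

/-- The rows of `X_φ`: the set `{1,…,d} ∖ J` (0-indexed: indices `< d` not in `J`). -/
def rowsF (n d : ℕ) (J : Finset (Fin n)) : Finset (Fin n) :=
  (Finset.univ.filter fun i : Fin n => i.val < d) \ J

/-- The subspace `U_φ = span{e_j + φ(e_j) : j ∈ J}`, where the linear map
`φ : p_J → C_J` is encoded by its matrix of coefficients `a`. -/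
noncomputable def Uphi (n : ℕ) (J : Finset (Fin n))
    (a : {i : Fin n // i ∉ J} → {j : Fin n // j ∈ J} → ℂ) : Submodule ℂ (Fin n → ℂ) :=
  Submodule.span ℂ {v | ∃ j : {j : Fin n // j ∈ J},
    v = ee n j.1 + ∑ i : {i : Fin n // i ∉ J}, a i j • ee n i.1}

/-- The `m × m` matrix `X_φ`, with rows indexed by `{1,…,d} ∖ J` and columns by
`J_{>d}`, both listed in increasing order. -/
noncomputable def Xphi (n d : ℕ) (J : Finset (Fin n)) (m : ℕ)
    (hrows : (rowsF n d J).card = m) (hcols : (colsF n d J).card = m)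
    (a : {i : Fin n // i ∉ J} → {j : Fin n // j ∈ J} → ℂ) :
    Matrix (Fin m) (Fin m) ℂ :=
  Matrix.of fun p q =>
    a ⟨((rowsF n d J).orderIsoOfFin hrows p : Fin n), by
        have h := ((rowsF n d J).orderIsoOfFin hrows p).2
        simp only [rowsF, Finset.mem_sdiff] at h
        exact h.2⟩
      ⟨((colsF n d J).orderIsoOfFin hcols q : Fin n), by
        have h := ((colsF n d J).orderIsoOfFin hcols q).2
        simp only [colsF, Finset.mem_filter] at h
        exact h.1⟩

/-- The index type of the "remaining" matrix entries of `φ`: pairs `(i, j)` with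
`i ∉ J`, `j ∈ J` that do not index an entry of `X_φ`. -/
abbrev RemPair (n d : ℕ) (J : Finset (Fin n)) :=
  {p : {i : Fin n // i ∉ J} × {j : Fin n // j ∈ J} //
    ¬((p.1 : Fin n) ∈ rowsF n d J ∧ (p.2 : Fin n) ∈ colsF n d J)}

/-! `U_φ` is the range of the injective map `c ↦ ∑_j c_j (e_j + φ e_j)`, whose value has
coordinate `c_k` at `k ∈ J` and `∑_j a_{k,j} c_j` at `k ∉ J`. A vector of `U_φ` lies in
`V_{n-d}` iff its coordinates below `d` vanish: at `k ∈ J` this kills `c_j` for `j < d`, and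
at the remaining `k ∉ J`, `k < d` it says exactly that the surviving coefficients
`(c_j)_{j ∈ J_{>d}}` lie in the kernel of `X_φ`. Hence `dim (U_φ ∩ V_{n-d}) = m - rank X_φ`,
and the bijection is the splitting of the coefficient matrix of `φ` into the block `X_φ` and
the remaining entries. -/

section BlockSplitting

variable {I K ι κ α : Type*} (P : I → Prop) (Q : K → Prop) [DecidablePred P] [DecidablePred Q]

def blockRestEquiv (eR : ι ≃ {i // P i}) (eC : κ ≃ {k // Q k}) :
    (I → K → α) ≃ Matrix ι κ α × ({x : I × K // ¬(P x.1 ∧ Q x.2)} → α) :=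
  (Equiv.curry I K α).symm.trans <|
    (Equiv.piEquivPiSubtypeProd (fun x : I × K => P x.1 ∧ Q x.2) fun _ => α).trans <|
      Equiv.prodCongr
        ((Equiv.arrowCongr
          ((Equiv.subtypeProdEquivProd).trans (eR.symm.prodCongr eC.symm)) (Equiv.refl α)).trans
          (Equiv.curry ι κ α))
        (Equiv.refl _)

theorem blockRestEquiv_apply (eR : ι ≃ {i // P i}) (eC : κ ≃ {k // Q k}) (a : I → K → α) :
    blockRestEquiv P Q eR eC a =
      (Matrix.of fun p q => a (eR p) (eC q), fun x => a x.1.1 x.1.2) :=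
  rfl

theorem card_subtype_not_and_prod [Fintype I] [Fintype K] :
    Fintype.card {x : I × K // ¬(P x.1 ∧ Q x.2)} =
      Fintype.card I * Fintype.card K - Fintype.card {i // P i} * Fintype.card {k // Q k} := by
  rw [Fintype.card_subtype_compl, Fintype.card_prod,
    Fintype.card_congr Equiv.subtypeProdEquivProd, Fintype.card_prod]

end BlockSplitting

theorem mem_Vhigh_iff {n : ℕ} (d : ℕ) (v : Fin n → ℂ) :
    v ∈ Vhigh n d ↔ ∀ k : Fin n, k.val < d → v k = 0 := by
  constructor
  · intro hv
    induction hv using Submodule.span_induction with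
    | mem x hx =>
      obtain ⟨i, hi, rfl⟩ := hx
      intro k hk
      exact Pi.single_eq_of_ne (by omega) 1
    | zero => simp
    | add x y _ _ hx hy => intro k hk; simp [hx k hk, hy k hk]
    | smul c x _ hx => intro k hk; simp [hx k hk]
  · intro hv
    rw [pi_eq_sum_univ v]
    refine Submodule.sum_mem _ fun k _ => ?_
    by_cases hk : k.val < d
    · simp [hv k hk]
    · refine Submodule.smul_mem _ _ (Submodule.subset_span ⟨k, by omega, ?_⟩)
      ext
      simp [ee, Pi.single_apply, eq_comm]

section Graph

variable {n : ℕ} {J : Finset (Fin n)} (a : {i : Fin n // i ∉ J} → {j : Fin n // j ∈ J} → ℂ)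

noncomputable def graphVec (j : {j : Fin n // j ∈ J}) : Fin n → ℂ :=
  ee n j.1 + ∑ i : {i : Fin n // i ∉ J}, a i j • ee n i.1

theorem graphVec_apply_of_mem (j k : {j : Fin n // j ∈ J}) :
    graphVec a j k.1 = if j = k then 1 else 0 := by
  have hne (i : {i : Fin n // i ∉ J}) : k.1 ≠ i.1 := fun h => i.2 (h ▸ k.2)
  simp [graphVec, ee, Pi.single_apply, hne, eq_comm]

theorem graphVec_apply_of_notMem (j : {j : Fin n // j ∈ J}) (i : {i : Fin n // i ∉ J}) :
    graphVec a j i.1 = a i j := by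
  have hne : i.1 ≠ j.1 := fun h => i.2 (h ▸ j.2)
  simp [graphVec, ee, Pi.single_apply, hne, Subtype.val_inj]

noncomputable def graphMap : ({j : Fin n // j ∈ J} → ℂ) →ₗ[ℂ] Fin n → ℂ :=
  Fintype.linearCombination ℂ (graphVec a)

theorem range_graphMap : LinearMap.range (graphMap a) = Uphi n J a := by
  rw [graphMap, Fintype.range_linearCombination, Uphi]
  congr 1
  ext v
  simp [graphVec, eq_comm]

theorem graphMap_apply_of_mem (c : {j : Fin n // j ∈ J} → ℂ) (k : {j : Fin n // j ∈ J}) :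
    graphMap a c k.1 = c k := by
  simp [graphMap, Fintype.linearCombination_apply, graphVec_apply_of_mem]

theorem graphMap_apply_of_notMem (c : {j : Fin n // j ∈ J} → ℂ) (i : {i : Fin n // i ∉ J}) :
    graphMap a c i.1 = ∑ j, a i j * c j := by
  simp [graphMap, Fintype.linearCombination_apply, graphVec_apply_of_notMem, mul_comm]

theorem graphMap_injective : Function.Injective (graphMap a) := fun c c' h =>
  funext fun k => by simpa only [graphMap_apply_of_mem] using congrFun h k.1

end Graph

section

variable {n d m : ℕ} {J : Finset (Fin n)}
  (hrows : (rowsF n d J).card = m) (hcols : (colsF n d J).card = m)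
  (a : {i : Fin n // i ∉ J} → {j : Fin n // j ∈ J} → ℂ)

theorem notMem_of_mem_rowsF {i : Fin n} (hi : i ∈ rowsF n d J) : i ∉ J :=
  (Finset.mem_sdiff.mp hi).2

theorem mem_of_mem_colsF {j : Fin n} (hj : j ∈ colsF n d J) : j ∈ J :=
  (Finset.mem_filter.mp hj).1

theorem mem_rowsF_iff {i : Fin n} (hi : i ∉ J) : i ∈ rowsF n d J ↔ i.val < d := by
  simp [rowsF, hi]

theorem mem_colsF_iff {j : Fin n} (hj : j ∈ J) : j ∈ colsF n d J ↔ d ≤ j.val := by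
  simp [colsF, hj]

def rowsEquiv : Fin m ≃ {i : {i : Fin n // i ∉ J} // i.1 ∈ rowsF n d J} :=
  ((rowsF n d J).orderIsoOfFin hrows).toEquiv.trans
    (Equiv.subtypeSubtypeEquivSubtype notMem_of_mem_rowsF).symm

def colsEquiv : Fin m ≃ {j : {j : Fin n // j ∈ J} // j.1 ∈ colsF n d J} :=
  ((colsF n d J).orderIsoOfFin hcols).toEquiv.trans
    (Equiv.subtypeSubtypeEquivSubtype mem_of_mem_colsF).symm

theorem Xphi_apply (p q : Fin m) :
    Xphi n d J m hrows hcols a p q = a (rowsEquiv hrows p) (colsEquiv hcols q) :=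
  rfl

theorem colsEquiv_val_injective : Function.Injective fun q => (colsEquiv hcols q).1 :=
  Subtype.val_injective.comp (colsEquiv hcols).injective

noncomputable def colsGraphMap : (Fin m → ℂ) →ₗ[ℂ] Fin n → ℂ :=
  graphMap a ∘ₗ Function.ExtendByZero.linearMap ℂ fun q => (colsEquiv hcols q).1

theorem colsGraphMap_apply (c : Fin m → ℂ) :
    colsGraphMap hcols a c = graphMap a (Function.extend (fun q => (colsEquiv hcols q).1) c 0) :=
  rfl

theorem extend_colsEquiv_apply_of_lt (c : Fin m → ℂ) {j : {j : Fin n // j ∈ J}}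
    (hj : j.1.val < d) :
    Function.extend (fun q => (colsEquiv hcols q).1) c 0 j = 0 := by
  refine Function.extend_apply' _ _ _ fun ⟨q, hq⟩ => ?_
  have := (mem_colsF_iff j.2).mp (hq ▸ (colsEquiv hcols q).2)
  omega

theorem colsGraphMap_apply_of_mem_of_lt (c : Fin m → ℂ) {k : Fin n} (hkJ : k ∈ J)
    (hkd : k.val < d) :
    colsGraphMap hcols a c k = 0 := by
  rw [colsGraphMap_apply, graphMap_apply_of_mem a _ ⟨k, hkJ⟩,
    extend_colsEquiv_apply_of_lt hcols c hkd]

theorem colsGraphMap_apply_of_notMem (c : Fin m → ℂ) (i : {i : Fin n // i ∉ J}) :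
    colsGraphMap hcols a c i.1 = ∑ q, a i (colsEquiv hcols q) * c q := by
  rw [colsGraphMap_apply, graphMap_apply_of_notMem]
  refine (Fintype.sum_of_injective _ (colsEquiv_val_injective hcols) _ _
    (fun j hj => ?_) fun q => ?_).symm
  · rw [Function.extend_apply' _ _ _ hj, Pi.zero_apply, mul_zero]
  · rw [(colsEquiv_val_injective hcols).extend_apply]

theorem colsGraphMap_injective : Function.Injective (colsGraphMap hcols a) := by
  refine (graphMap_injective a).comp fun c c' h => funext fun q => ?_
  simpa only [Function.ExtendByZero.linearMap_apply,
    (colsEquiv_val_injective hcols).extend_apply]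
    using congrFun h (colsEquiv hcols q).1

theorem range_colsGraphMap_le : LinearMap.range (colsGraphMap hcols a) ≤ Uphi n J a :=
  range_graphMap a ▸ LinearMap.range_comp_le_range _ _

theorem Uphi_inf_Vhigh_le_range_colsGraphMap :
    Uphi n J a ⊓ Vhigh n d ≤ LinearMap.range (colsGraphMap hcols a) := by
  rintro u ⟨hu, hv⟩
  rw [SetLike.mem_coe, ← range_graphMap] at hu
  obtain ⟨c, rfl⟩ := hu
  rw [SetLike.mem_coe, mem_Vhigh_iff] at hv
  refine ⟨fun q => c (colsEquiv hcols q), congrArg (graphMap a) (funext fun j => ?_)⟩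
  simp only [Function.ExtendByZero.linearMap_apply]
  by_cases hj : j.1 ∈ colsF n d J
  · obtain ⟨q, rfl⟩ : ∃ q, (colsEquiv hcols q).1 = j :=
      ⟨(colsEquiv hcols).symm ⟨j, hj⟩, by simp⟩
    exact (colsEquiv_val_injective hcols).extend_apply _ _ _
  · have hjd : j.1.val < d := not_le.mp fun h => hj ((mem_colsF_iff j.2).mpr h)
    rw [extend_colsEquiv_apply_of_lt hcols _ hjd, ← graphMap_apply_of_mem a c j, hv _ hjd]

theorem comap_colsGraphMap_Vhigh :
    (Vhigh n d).comap (colsGraphMap hcols a) =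
      LinearMap.ker (Xphi n d J m hrows hcols a).mulVecLin := by
  ext c
  rw [Submodule.mem_comap, mem_Vhigh_iff, LinearMap.mem_ker, Matrix.mulVecLin_apply]
  have hrow (p : Fin m) : colsGraphMap hcols a c (rowsEquiv hrows p).1.1 =
      (Xphi n d J m hrows hcols a).mulVec c p := by
    rw [colsGraphMap_apply_of_notMem]
    simp only [Matrix.mulVec, dotProduct, Xphi_apply]
  constructor
  · intro h
    funext p
    rw [← hrow]
    exact h _ ((mem_rowsF_iff (rowsEquiv hrows p).1.2).mp (rowsEquiv hrows p).2)
  · intro h k hkd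
    by_cases hkJ : k ∈ J
    · exact colsGraphMap_apply_of_mem_of_lt hcols a c hkJ hkd
    · obtain ⟨p, hp⟩ := (rowsEquiv hrows).surjective ⟨⟨k, hkJ⟩, (mem_rowsF_iff hkJ).mpr hkd⟩
      simpa [hp, h] using hrow p

theorem finrank_Uphi_inf_Vhigh :
    Module.finrank ℂ ↥(Uphi n J a ⊓ Vhigh n d) = m - (Xphi n d J m hrows hcols a).rank := by
  have hUV : Uphi n J a ⊓ Vhigh n d =
      (LinearMap.ker (Xphi n d J m hrows hcols a).mulVecLin).map (colsGraphMap hcols a) := by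
    rw [← comap_colsGraphMap_Vhigh, Submodule.map_comap_eq]
    exact le_antisymm (le_inf (Uphi_inf_Vhigh_le_range_colsGraphMap hcols a) inf_le_right)
      (inf_le_inf_right _ (range_colsGraphMap_le hcols a))
  rw [hUV, ← (Submodule.equivMapOfInjective _ (colsGraphMap_injective hcols a) _).finrank_eq]
  have := (Xphi n d J m hrows hcols a).mulVecLin.finrank_range_add_finrank_ker
  rw [Module.finrank_fin_fun] at this
  rw [Matrix.rank]
  omega

end

theorem stmt9_general (n d : ℕ)
    (J : Finset (Fin n)) (hJ : J.card = d) (m : ℕ)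
    (hcols : (colsF n d J).card = m) (hrows : (rowsF n d J).card = m)
    (r : ℕ) (hr : r ≤ m) :
    Fintype.card (RemPair n d J) = d * (n - d) - m ^ 2 ∧
    Set.BijOn
      (fun a : {i : Fin n // i ∉ J} → {j : Fin n // j ∈ J} → ℂ =>
        (Xphi n d J m hrows hcols a, fun p : RemPair n d J => a p.1.1 p.1.2))
      {a | r ≤ Module.finrank ℂ ↥(Uphi n J a ⊓ Vhigh n d)}
      ({X : Matrix (Fin m) (Fin m) ℂ | X.rank ≤ m - r} ×ˢ
        (Set.univ : Set (RemPair n d J → ℂ))) := by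
  constructor
  · rw [card_subtype_not_and_prod (fun i : {i : Fin n // i ∉ J} => i.1 ∈ rowsF n d J)
      (fun j : {j : Fin n // j ∈ J} => j.1 ∈ colsF n d J), Fintype.card_subtype_compl,
      Fintype.card_coe, hJ, Fintype.card_fin, Fintype.card_congr (rowsEquiv hrows).symm,
      Fintype.card_congr (colsEquiv hcols).symm, Fintype.card_fin, mul_comm, sq]
  · let e := blockRestEquiv (α := ℂ) (fun i : {i : Fin n // i ∉ J} => i.1 ∈ rowsF n d J)
      (fun j : {j : Fin n // j ∈ J} => j.1 ∈ colsF n d J) (rowsEquiv hrows) (colsEquiv hcols)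
    have he : ∀ a, e a = (Xphi n d J m hrows hcols a, fun p : RemPair n d J => a p.1.1 p.1.2) :=
      blockRestEquiv_apply _ _ _ _
    have hsource : {a | r ≤ Module.finrank ℂ ↥(Uphi n J a ⊓ Vhigh n d)} =
        e ⁻¹' ({X : Matrix (Fin m) (Fin m) ℂ | X.rank ≤ m - r} ×ˢ Set.univ) := by
      ext a
      have := (Xphi n d J m hrows hcols a).rank_le_width
      simp only [Set.mem_ofPred_eq, Set.mem_preimage, he, Set.mem_prod, Set.mem_univ, and_true,
        finrank_Uphi_inf_Vhigh hrows hcols a]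
      omega
    rw [hsource, ← funext he]
    exact e.bijective.bijOn_preimage

theorem stmt9 (n d : ℕ) (hd1 : 1 ≤ d) (hdn : d ≤ n - d)
    (J : Finset (Fin n)) (hJ : J.card = d) (m : ℕ)
    (hcols : (colsF n d J).card = m) (hrows : (rowsF n d J).card = m)
    (r : ℕ) (hr : r ≤ m) :
    Fintype.card (RemPair n d J) = d * (n - d) - m ^ 2 ∧
    Set.BijOn
      (fun a : {i : Fin n // i ∉ J} → {j : Fin n // j ∈ J} → ℂ =>
        (Xphi n d J m hrows hcols a, fun p : RemPair n d J => a p.1.1 p.1.2))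
      {a | r ≤ Module.finrank ℂ ↥(Uphi n J a ⊓ Vhigh n d)}
      ({X : Matrix (Fin m) (Fin m) ℂ | X.rank ≤ m - r} ×ˢ
        (Set.univ : Set (RemPair n d J → ℂ))) :=
  stmt9_general n d J hJ m hcols hrows r hr
end

section
/- Let R be a commutative ring, z₀ ∈ R, and Z an (n−d)×d matrix over R. Let M be the n×d matrix whose top d×d block is z₀ times the identity matrix and whose bottom (n−d)×d block is Z. Then for every d-element subset I ⊆ {1,…,n} with deg I = k there is a sign ε ∈ {1,−1} (depending only on I) such that det(M_I) = ε · z₀^{d−k} · det(Z′), where M_I is the d×d submatrix of M on the rows indexed by I, and Z′ is the k×k submatrix of Z with rows {i−d : i ∈ I, i > d} and columns {1,…,d}∖(I∩{1,…,d}). -/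
/-- The row set of `Z′`: `{i − d : i ∈ I, i > d}`, as a subset of `Fin (n - d)`. -/
def rowsZ (n d : ℕ) (I : Finset (Fin n)) : Finset (Fin (n - d)) :=
  Finset.univ.filter fun t : Fin (n - d) => ∃ i ∈ I, i.val = t.val + d

/-- The column set of `Z′`: `{1,…,d} ∖ (I ∩ {1,…,d})`, as a subset of `Fin d`. -/
def colsZ (n d : ℕ) (I : Finset (Fin n)) : Finset (Fin d) :=
  Finset.univ.filter fun j : Fin d => ∀ i ∈ I, i.val ≠ j.val

/-- The `n × d` matrix whose top `d × d` block is `z₀ · Id` and whose bottom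
`(n−d) × d` block is `Z`. -/
def Mmat (n d : ℕ) (R : Type*) [CommRing R] (z₀ : R)
    (Z : Matrix (Fin (n - d)) (Fin d) R) : Matrix (Fin n) (Fin d) R :=
  Matrix.of fun i j =>
    if h : i.val < d then (if i.val = j.val then z₀ else 0)
    else Z ⟨i.val - d, by have := i.isLt; omega⟩ j

/-!
Reorder the rows of `M_I` so that the rows `i ∈ I` with `i < d` come first, and its columns so
that the columns `j ∈ I` come first, followed by the columns of `Z′`. Both reorderings are
bijections fixed by `I` alone, so they change the determinant by a sign independent of `R`, `z₀`
and `Z`; afterwards `M_I` is block lower triangular with diagonal blocks `z₀ • 1` and `Z′`.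
-/

open Finset Matrix Equiv

section BlockDeterminant

variable {R ι m k : Type*} [CommRing R] [Fintype ι] [DecidableEq ι]
  [Fintype m] [DecidableEq m] [Fintype k] [DecidableEq k]

theorem Matrix.det_submatrix_equiv (A : Matrix ι ι R) (e₁ e₂ : m ≃ ι) :
    (A.submatrix e₁ e₂).det = Perm.sign (e₂.trans e₁.symm) * A.det := by
  have h : A.submatrix e₁ e₂ = (A.submatrix e₁ e₁).submatrix id (e₂.trans e₁.symm) := by
    ext; simp
  rw [h, det_permute', det_submatrix_equiv_self]

theorem Matrix.det_eq_of_submatrix_eq_fromBlocks (A : Matrix ι ι R) (eR eC : m ⊕ k ≃ ι)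
    {z : R} {C : Matrix k m R} {D : Matrix k k R}
    (h : A.submatrix eR eC = fromBlocks (z • 1) 0 C D) :
    A.det = Perm.sign (eC.symm.trans eR) * z ^ Fintype.card m * D.det := by
  have hA : A = (A.submatrix eR eC).submatrix eR.symm eC.symm := by
    ext; simp
  rw [hA, det_submatrix_equiv, h, det_fromBlocks_zero₁₂, det_smul, det_one, mul_one,
    symm_symm, mul_assoc]

end BlockDeterminant

section Mmat

variable {n d : ℕ} {R : Type*} [CommRing R] (z₀ : R) (Z : Matrix (Fin (n - d)) (Fin d) R)

theorem Mmat_apply_of_lt {i : Fin n} (hi : i.val < d) (j : Fin d) :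
    Mmat n d R z₀ Z i j = if i.val = j.val then z₀ else 0 := by
  simp [Mmat, hi]

theorem Mmat_apply_add (t : Fin (n - d)) (j : Fin d) :
    Mmat n d R z₀ Z ⟨t + d, by omega⟩ j = Z t j := by
  simp [Mmat]

end Mmat

section Blocks

abbrev colsI (n d : ℕ) (I : Finset (Fin n)) : Type := {j : Fin d // j ∉ colsZ n d I}

variable {n d k : ℕ} (I : Finset (Fin n))

theorem exists_mem_of_notMem_colsZ {j : Fin d} (hj : j ∉ colsZ n d I) :
    ∃ h : j.val < n, (⟨j.val, h⟩ : Fin n) ∈ I := by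
  obtain ⟨i, hi, hij⟩ : ∃ i ∈ I, i.val = j.val := by simpa [colsZ] using hj
  exact ⟨hij ▸ i.isLt, (Fin.ext hij : i = ⟨j, hij ▸ i.isLt⟩) ▸ hi⟩

theorem add_mem_of_mem_rowsZ {t : Fin (n - d)} (ht : t ∈ rowsZ n d I) :
    (⟨t + d, by omega⟩ : Fin n) ∈ I := by
  obtain ⟨i, hi, hit⟩ := (mem_filter.1 ht).2
  exact (Fin.ext hit : i = ⟨t + d, by omega⟩) ▸ hi

def blockColEquiv (hCZ : (colsZ n d I).card = k) : colsI n d I ⊕ Fin k ≃ Fin d :=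
  (sumCongr (Equiv.refl _) ((colsZ n d I).orderIsoOfFin hCZ).toEquiv).trans
    ((sumComm _ _).trans (sumCompl (· ∈ colsZ n d I)))

theorem card_colsI (hCZ : (colsZ n d I).card = k) : Fintype.card (colsI n d I) = d - k := by
  simp [hCZ]

variable (hRZ : (rowsZ n d I).card = k)

def blockRow : colsI n d I ⊕ Fin k → I :=
  Sum.elim
    (fun j => ⟨⟨j.val, (exists_mem_of_notMem_colsZ I j.2).1⟩,
      (exists_mem_of_notMem_colsZ I j.2).2⟩)
    (fun p => ⟨_, add_mem_of_mem_rowsZ I ((rowsZ n d I).orderIsoOfFin hRZ p).2⟩)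

theorem blockRow_injective : Function.Injective (blockRow I hRZ) := by
  rintro (j | p) (j' | p') h <;>
    simp only [blockRow, Sum.elim_inl, Sum.elim_inr, Subtype.mk.injEq, Fin.mk.injEq] at h
  · exact congrArg _ (Subtype.ext (Fin.ext h))
  · have := j.1.isLt; omega
  · have := j'.1.isLt; omega
  · exact congrArg _ (((rowsZ n d I).orderIsoOfFin hRZ).injective
      (Subtype.ext (Fin.ext (Nat.add_right_cancel h))))

theorem blockRow_bijective (hI : I.card = d) (hCZ : (colsZ n d I).card = k) :
    Function.Bijective (blockRow I hRZ) :=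
  (Fintype.bijective_iff_injective_and_card _).2
    ⟨blockRow_injective I hRZ, by rw [Fintype.card_congr (blockColEquiv I hCZ)]; simp [hI]⟩

variable (hI : I.card = d) (hCZ : (colsZ n d I).card = k)

noncomputable def blockRowEquiv : colsI n d I ⊕ Fin k ≃ Fin d :=
  (ofBijective (blockRow I hRZ) (blockRow_bijective I hRZ hI hCZ)).trans
    (I.orderIsoOfFin hI).symm.toEquiv

theorem coe_orderIsoOfFin_blockRowEquiv (x : colsI n d I ⊕ Fin k) :
    (I.orderIsoOfFin hI (blockRowEquiv I hRZ hI hCZ x) : Fin n) = blockRow I hRZ x := by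
  simp [blockRowEquiv]

theorem Mmat_submatrix_blockRowEquiv_blockColEquiv {R : Type*} [CommRing R] (z₀ : R)
    (Z : Matrix (Fin (n - d)) (Fin d) R) :
    ((Mmat n d R z₀ Z).submatrix (fun p : Fin d => (I.orderIsoOfFin hI p : Fin n)) id).submatrix
        (blockRowEquiv I hRZ hI hCZ) (blockColEquiv I hCZ) =
      fromBlocks (z₀ • 1) 0
        (Z.submatrix (fun p => (rowsZ n d I).orderIsoOfFin hRZ p) Subtype.val)
        (of fun p q : Fin k =>
          Z ((rowsZ n d I).orderIsoOfFin hRZ p) ((colsZ n d I).orderIsoOfFin hCZ q)) := by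
  ext (j | p) (j' | q) <;>
    simp only [submatrix_apply, id, coe_orderIsoOfFin_blockRowEquiv, fromBlocks_apply₁₁,
      fromBlocks_apply₁₂, fromBlocks_apply₂₁, fromBlocks_apply₂₂]
  · simp [blockRow, blockColEquiv, Mmat_apply_of_lt, one_apply, Subtype.ext_iff, Fin.ext_iff]
  · have hq := (colsZ n d I).orderEmbOfFin_mem hCZ q
    simp [blockRow, blockColEquiv, Mmat_apply_of_lt]
    exact fun hjq => (j.2 (Fin.ext hjq ▸ hq)).elim
  · simp [blockRow, blockColEquiv, Mmat_apply_add]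
  · simp [blockRow, blockColEquiv, Mmat_apply_add]

end Blocks

theorem stmt11_general (n d : ℕ)
    (I : Finset (Fin n)) (hI : I.card = d) (k : ℕ)
    (hRZ : (rowsZ n d I).card = k) (hCZ : (colsZ n d I).card = k) :
    ∃ ε : ℤ, (ε = 1 ∨ ε = -1) ∧
      ∀ (R : Type) [CommRing R] (z₀ : R) (Z : Matrix (Fin (n - d)) (Fin d) R),
        ((Mmat n d R z₀ Z).submatrix
            (fun p : Fin d => (I.orderIsoOfFin hI p : Fin n)) id).det =
          (ε : R) * z₀ ^ (d - k) *
            (Matrix.of fun p q : Fin k =>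
              Z ((rowsZ n d I).orderIsoOfFin hRZ p)
                ((colsZ n d I).orderIsoOfFin hCZ q)).det := by
  refine ⟨Perm.sign ((blockColEquiv I hCZ).symm.trans (blockRowEquiv I hRZ hI hCZ)),
    Int.isUnit_iff.1 (Units.isUnit _), fun R _ z₀ Z => ?_⟩
  rw [det_eq_of_submatrix_eq_fromBlocks _ _ _
      (Mmat_submatrix_blockRowEquiv_blockColEquiv I hRZ hI hCZ z₀ Z),
    card_colsI I hCZ]

theorem stmt11 (n d : ℕ) (hd1 : 1 ≤ d) (hdn : d ≤ n - d)
    (I : Finset (Fin n)) (hI : I.card = d) (k : ℕ) (hk : degS n d I = k)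
    (hRZ : (rowsZ n d I).card = k) (hCZ : (colsZ n d I).card = k) :
    ∃ ε : ℤ, (ε = 1 ∨ ε = -1) ∧
      ∀ (R : Type) [CommRing R] (z₀ : R) (Z : Matrix (Fin (n - d)) (Fin d) R),
        ((Mmat n d R z₀ Z).submatrix
            (fun p : Fin d => (I.orderIsoOfFin hI p : Fin n)) id).det =
          (ε : R) * z₀ ^ (d - k) *
            (Matrix.of fun p q : Fin k =>
              Z ((rowsZ n d I).orderIsoOfFin hRZ p)
                ((colsZ n d I).orderIsoOfFin hCZ q)).det :=
  stmt11_general n d I hI k hRZ hCZ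
end

section
/- Let m ≥ 2. In the polynomial ring ℂ[x_{ij} : 1 ≤ i,j ≤ m], the m² polynomials D_{ij} (for 1 ≤ i,j ≤ m), where D_{ij} is the determinant of the (m−1)×(m−1) submatrix of the generic matrix (x_{kl}) obtained by deleting row i and column j, form an algebraically independent family over ℂ. -/
/-- The cofactor minor `D_{ij}`: the determinant of the `(m−1) × (m−1)` submatrix of the
generic `m × m` matrix `(x_{kl})` obtained by deleting row `i` and column `j`. -/
noncomputable def Dminor (m : ℕ) (i j : Fin m) : MvPolynomial (Fin m × Fin m) ℂ :=
  Matrix.det (Matrix.of fun p q : Fin (m - 1) =>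
    MvPolynomial.X
      (((Finset.univ.erase i).orderIsoOfFin
          (by simp [Finset.card_erase_of_mem]) p : Fin m),
       ((Finset.univ.erase j).orderIsoOfFin
          (by simp [Finset.card_erase_of_mem]) q : Fin m)))

lemma orderIso_erase_eq {n k : ℕ} (i : Fin (n + 1)) (hk : k = n)
    (h : (Finset.univ.erase i).card = k) (p : Fin k) :
    ((Finset.univ.erase i).orderIsoOfFin h p : Fin (n + 1))
      = i.succAbove (Fin.cast hk p) := by
  rw [Finset.coe_orderIsoOfFin_apply]
  have hmono : StrictMono (fun q : Fin k => i.succAbove (Fin.cast hk q)) :=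
    (Fin.strictMono_succAbove i).comp fun a b hab => by
      simp only [Fin.lt_def, Fin.coe_cast]; exact hab
  exact (congrFun (Finset.orderEmbOfFin_unique h
    (fun x => Finset.mem_erase.2 ⟨Fin.succAbove_ne i _, Finset.mem_univ _⟩) hmono) p).symm

lemma eval_Dminor {n : ℕ} (b : Fin (n + 1) × Fin (n + 1) → ℂ) (i j : Fin (n + 1)) :
    MvPolynomial.eval b (Dminor (n + 1) i j)
      = Matrix.det ((Matrix.of fun k l : Fin (n + 1) => b (k, l)).submatrix
          i.succAbove j.succAbove) := by
  unfold Dminor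
  rw [RingHom.map_det]
  have hk : n + 1 - 1 = n := rfl
  rw [← Matrix.det_submatrix_equiv_self (finCongr hk)
    ((Matrix.of fun k l : Fin (n + 1) => b (k, l)).submatrix i.succAbove j.succAbove)]
  refine congrArg Matrix.det (Matrix.ext fun p q => ?_)
  rw [RingHom.mapMatrix_apply, Matrix.map_apply, Matrix.of_apply,
    orderIso_erase_eq i hk, orderIso_erase_eq j hk]
  simp [Matrix.submatrix_apply, finCongr]

theorem stmt12 (m : ℕ) (hm : 2 ≤ m) :
    AlgebraicIndependent ℂ (fun ij : Fin m × Fin m => Dminor m ij.1 ij.2) := by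
  obtain ⟨n, rfl⟩ : ∃ n, m = n + 1 := ⟨m - 1, by omega⟩
  have hn : 0 < n := by omega
  rw [algebraicIndependent_iff]
  intro p hp
  set d : MvPolynomial (Fin (n+1) × Fin (n+1)) ℂ :=
    Matrix.det (Matrix.of fun k l : Fin (n+1) => MvPolynomial.X (k, l)) with hd
  have hd0 : d ≠ 0 := by
    intro h
    have h2 := congrArg
      (MvPolynomial.eval (fun kl : Fin (n+1) × Fin (n+1) => if kl.1 = kl.2 then (1:ℂ) else 0)) h
    rw [hd, RingHom.map_det, map_zero] at h2
    have h3 : ((MvPolynomial.eval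
        (fun kl : Fin (n+1) × Fin (n+1) => if kl.1 = kl.2 then (1:ℂ) else 0)).mapMatrix
        (Matrix.of fun k l : Fin (n+1) => MvPolynomial.X (k, l)))
        = (1 : Matrix (Fin (n+1)) (Fin (n+1)) ℂ) := by
      ext k l
      by_cases hkl : k = l <;> simp [Matrix.one_apply, hkl]
    rw [h3, Matrix.det_one] at h2
    exact one_ne_zero h2
  have hadj : ∀ (A : Matrix (Fin (n+1)) (Fin (n+1)) ℂ), A.det ≠ 0 →
      Matrix.adjugate A = A.det • A⁻¹ := by
    intro A hA
    rw [Matrix.inv_def, smul_smul, Ring.inverse_eq_inv', mul_inv_cancel₀ hA, one_smul]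
  have key : p * d = 0 := by
    apply MvPolynomial.funext
    intro x
    rw [map_mul, map_zero]
    set C : Matrix (Fin (n+1)) (Fin (n+1)) ℂ := Matrix.of fun k l => x (k, l) with hC
    have hevald : MvPolynomial.eval x d = C.det := by
      rw [hd, RingHom.map_det]
      congr 1
      ext k l
      simp [hC]
    by_cases hdet : C.det = 0
    · rw [hevald, hdet, mul_zero]
    · suffices hx0 : MvPolynomial.eval x p = 0 by rw [hx0, zero_mul]
      set C' : Matrix (Fin (n+1)) (Fin (n+1)) ℂ :=
        Matrix.of fun a b => (-1 : ℂ) ^ ((a : ℕ) + (b : ℕ)) * x (b, a) with hC'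
      have hC'det : C'.det ≠ 0 := by
        have hfac : C' = (Matrix.diagonal fun k : Fin (n+1) => (-1 : ℂ) ^ (k : ℕ)) * Matrix.transpose C *
            (Matrix.diagonal fun k : Fin (n+1) => (-1 : ℂ) ^ (k : ℕ)) := by
          ext a b
          simp only [Matrix.mul_diagonal, Matrix.diagonal_mul, Matrix.transpose_apply,
            hC', hC, Matrix.of_apply, pow_add]
          ring
        have hdiag : (Matrix.diagonal fun k : Fin (n+1) => (-1 : ℂ) ^ (k : ℕ)).det ≠ 0 := by
          rw [Matrix.det_diagonal]
          exact Finset.prod_ne_zero_iff.2 fun k _ => pow_ne_zero _ (by norm_num)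
        rw [hfac, Matrix.det_mul, Matrix.det_mul, Matrix.det_transpose]
        exact mul_ne_zero (mul_ne_zero hdiag hdet) hdiag
      obtain ⟨t, ht⟩ := IsAlgClosed.exists_pow_nat_eq C'.det hn
      set B : Matrix (Fin (n+1)) (Fin (n+1)) ℂ := t • C'⁻¹ with hB
      have hinvdet : (C'⁻¹).det ≠ 0 := by
        rw [Matrix.det_nonsing_inv, Ring.inverse_eq_inv']
        exact inv_ne_zero hC'det
      have hadjB : Matrix.adjugate B = C' := by
        rw [hB, Matrix.adjugate_smul, hadj _ hinvdet,
          Matrix.nonsing_inv_nonsing_inv _ (isUnit_iff_ne_zero.2 hC'det),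
          Matrix.det_nonsing_inv, Ring.inverse_eq_inv', Fintype.card_fin]
        rw [smul_smul, Nat.add_sub_cancel, ht, mul_inv_cancel₀ hC'det, one_smul]
      have hminor : ∀ i j : Fin (n+1),
          Matrix.det (B.submatrix i.succAbove j.succAbove) = x (i, j) := by
        intro i j
        have h1 := Matrix.adjugate_fin_succ_eq_det_submatrix B j i
        rw [hadjB] at h1
        have h2 : C' j i = (-1 : ℂ) ^ ((i : ℕ) + (j : ℕ)) * x (i, j) := by
          simp [hC', add_comm]
        rw [h2] at h1
        have hsq : (-1 : ℂ) ^ ((i : ℕ) + (j : ℕ)) * (-1 : ℂ) ^ ((i : ℕ) + (j : ℕ)) = 1 := by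
          rw [← pow_add, Even.neg_one_pow ⟨_, rfl⟩]
        calc Matrix.det (B.submatrix i.succAbove j.succAbove)
            = ((-1 : ℂ) ^ ((i : ℕ) + (j : ℕ)) * (-1 : ℂ) ^ ((i : ℕ) + (j : ℕ))) *
              Matrix.det (B.submatrix i.succAbove j.succAbove) := by rw [hsq, one_mul]
          _ = (-1 : ℂ) ^ ((i : ℕ) + (j : ℕ)) *
              ((-1 : ℂ) ^ ((i : ℕ) + (j : ℕ)) * Matrix.det (B.submatrix i.succAbove j.succAbove))
              := by ring
          _ = (-1 : ℂ) ^ ((i : ℕ) + (j : ℕ)) * ((-1 : ℂ) ^ ((i : ℕ) + (j : ℕ)) * x (i, j)) := by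
              rw [← h1]
          _ = x (i, j) := by rw [← mul_assoc, hsq, one_mul]
      set b : Fin (n+1) × Fin (n+1) → ℂ := fun kl => B kl.1 kl.2 with hb
      have heval : MvPolynomial.eval b
          (MvPolynomial.aeval (fun ij : Fin (n+1) × Fin (n+1) => Dminor (n+1) ij.1 ij.2) p)
          = MvPolynomial.eval
            (fun ij : Fin (n+1) × Fin (n+1) =>
              MvPolynomial.eval b (Dminor (n+1) ij.1 ij.2)) p := by
        rw [MvPolynomial.aeval_def, MvPolynomial.algebraMap_eq, ← MvPolynomial.eval_assoc]
        rfl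
      have hpoint : (fun ij : Fin (n+1) × Fin (n+1) =>
          MvPolynomial.eval b (Dminor (n+1) ij.1 ij.2)) = x := by
        funext ij
        rw [eval_Dminor]
        have hBof : (Matrix.of fun k l : Fin (n+1) => b (k, l)) = B := by
          ext k l; simp [hb]
        rw [hBof, hminor ij.1 ij.2]
      rw [hp, map_zero] at heval
      rw [hpoint] at heval
      exact heval.symm
  rcases mul_eq_zero.1 key with h | h
  · exact h
  · exact absurd h hd0
end

section
/- Let 1 ≤ r ≤ d ≤ n−d. Let λ_1 ≥ λ_2 ≥ ⋯ ≥ λ_r ≥ 0 be integers with λ_1 ≤ n−d such that for every i ∈ {1,…,r} either λ_i ≤ i−1 or λ_i ≥ n−d−r+i. Set a = #{i : λ_i ≥ n−d−r+i}. Then 0 ≤ (λ_1 + ⋯ + λ_r) − a·(n−d−r) ≤ r², and the value r² is attained if and only if λ_i = n−d for all i = 1,…,r. -/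
theorem stmt14 (n d r : ℕ) (hr1 : 1 ≤ r) (hrd : r ≤ d) (hdn : d ≤ n - d)
    (l : Fin r → ℕ) (hanti : Antitone l) (hbound : ∀ i, l i ≤ n - d)
    (hhook : ∀ i : Fin r, l i ≤ i.val ∨ (n - d) - r + i.val + 1 ≤ l i) :
    0 ≤ (∑ i, (l i : ℤ)) -
        ((Finset.univ.filter fun i : Fin r => (n - d) - r + i.val + 1 ≤ l i).card : ℤ) *
          (((n - d) - r : ℕ) : ℤ) ∧
    (∑ i, (l i : ℤ)) -
        ((Finset.univ.filter fun i : Fin r => (n - d) - r + i.val + 1 ≤ l i).card : ℤ) *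
          (((n - d) - r : ℕ) : ℤ) ≤ (r : ℤ) ^ 2 ∧
    ((∑ i, (l i : ℤ)) -
        ((Finset.univ.filter fun i : Fin r => (n - d) - r + i.val + 1 ≤ l i).card : ℤ) *
          (((n - d) - r : ℕ) : ℤ) = (r : ℤ) ^ 2 ↔ ∀ i, l i = n - d) := by
  set m := n - d with hm
  have hmr : r ≤ m := le_trans hrd hdn
  set f : Fin r → ℤ := fun i =>
    (l i : ℤ) - if m - r + i.val + 1 ≤ l i then ((m - r : ℕ) : ℤ) else 0 with hf
  have hkey : (∑ i, (l i : ℤ)) -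
      ((Finset.univ.filter fun i : Fin r => m - r + i.val + 1 ≤ l i).card : ℤ) *
        (((m - r : ℕ)) : ℤ) = ∑ i, f i := by
    rw [Finset.sum_sub_distrib]
    congr 1
    rw [← Finset.sum_filter, Finset.sum_const, nsmul_eq_mul]
  have hf0 : ∀ i : Fin r, 0 ≤ f i := by
    intro i
    simp only [hf]
    split_ifs with h
    · have : (m - r : ℕ) ≤ l i := by omega
      push_cast
      omega
    · simp
  have hfr : ∀ i : Fin r, f i ≤ (r : ℤ) := by
    intro i
    simp only [hf]
    split_ifs with h
    · have h1 := hbound i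
      push_cast
      omega
    · rcases hhook i with h' | h'
      · have := i.isLt
        push_cast
        omega
      · exact absurd h' h
  have hsum_ub : (∑ i, f i) ≤ (r : ℤ) ^ 2 := by
    calc (∑ i, f i) ≤ ∑ _i : Fin r, (r : ℤ) :=
          Finset.sum_le_sum fun i _ => hfr i
      _ = (r : ℤ) ^ 2 := by
          simp [Finset.sum_const, nsmul_eq_mul, sq]
  refine ⟨?_, ?_, ?_⟩
  · rw [hkey]
    exact Finset.sum_nonneg fun i _ => hf0 i
  · rw [hkey]; exact hsum_ub
  · rw [hkey]
    constructor
    · intro heq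
      have hall : ∀ i ∈ Finset.univ, f i = (r : ℤ) := by
        rw [← Finset.sum_eq_sum_iff_of_le fun i _ => hfr i]
        rw [heq]
        simp [Finset.sum_const, nsmul_eq_mul, sq]
      intro i
      have hi := hall i (Finset.mem_univ i)
      simp only [hf] at hi
      split_ifs at hi with h
      · have h1 := hbound i
        push_cast at hi
        omega
      · rcases hhook i with h' | h'
        · have := i.isLt
          push_cast at hi
          omega
        · exact absurd h' h
    · intro hl
      have : ∀ i : Fin r, f i = (r : ℤ) := by
        intro i
        have hi := i.isLt
        have hP : m - r + i.val + 1 ≤ l i := by rw [hl i]; omega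
        simp only [hf, if_pos hP, hl i]
        push_cast
        omega
      rw [Finset.sum_congr rfl fun i _ => this i]
      simp [Finset.sum_const, nsmul_eq_mul, sq]
end

section
/- Let 1 ≤ r ≤ n−d. The number of integer sequences λ_1 ≥ λ_2 ≥ ⋯ ≥ λ_r ≥ 0 with λ_1 ≤ n−d such that for every i ∈ {1,…,r} either λ_i ≤ i−1 or λ_i ≥ n−d−r+i equals the central binomial coefficient C(2r, r). -/
/-!
Lowering every entry `λ_i ≥ n - d - r + i` by `n - d - r` closes the gap and turns the
sequences into the partitions fitting in an `r × r` box, i.e. weakly decreasing `λ` with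
`λ_1 ≤ r`. Such a partition is determined by the `r`-element set `{λ_{r-i} + i}` of
`{0, …, 2r - 1}`, so there are `C(2r, r)` of them.
-/

open Finset

namespace Fin

variable {r N : ℕ} {g : Fin r → Fin N}

theorem val_le_val_of_strictMono (hg : StrictMono g) (i : Fin r) : (i : ℕ) ≤ g i := by
  simpa using card_le_card_of_injOn g (s := Iio i) (t := Iio (g i))
    (fun j hj => by simpa using hg (by simpa using hj)) hg.injective.injOn

theorem val_add_sub_le_of_strictMono (hg : StrictMono g) (i : Fin r) :
    (g i : ℕ) + (r - i) ≤ N := by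
  have := card_le_card_of_injOn g (s := Ioi i) (t := Ioi (g i))
    (fun j hj => by simpa using hg (by simpa using hj)) hg.injective.injOn
  simp only [card_Ioi] at this
  omega

theorem val_sub_val_le_of_strictMono (hg : StrictMono g) {a b : Fin r} :
    (b : ℕ) - a ≤ g b - g a := by
  simpa using card_le_card_of_injOn g (s := Ico a b) (t := Ico (g a) (g b))
    (fun j hj => by
      simp only [coe_Ico, Set.mem_Ico] at hj ⊢
      exact ⟨hg.monotone hj.1, hg hj.2⟩)
    hg.injective.injOn

theorem antitone_of_forall_succ_le {α : Type*} [Preorder α] {f : Fin r → α}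
    (h : ∀ a b : Fin r, (b : ℕ) = a + 1 → f b ≤ f a) : Antitone f :=
  (antitone_iff_forall_covBy f).2 fun a b hab =>
    h a b (Nat.covBy_iff_add_one_eq.1 (Fin.covBy_iff.1 hab)).symm

end Fin

def boundedAntitone (r k : ℕ) : Set (Fin r → ℕ) := {f | Antitone f ∧ ∀ i, f i ≤ k}

def boundedAntitoneEquivOrderEmbedding (r k : ℕ) :
    boundedAntitone r k ≃ (Fin r ↪o Fin (k + r)) where
  toFun f := OrderEmbedding.ofStrictMono
    (fun i => ⟨f.1 i.rev + i, by have := f.2.2 i.rev; omega⟩)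
    fun i j hij => by
      have := f.2.1 (Fin.rev_le_rev.2 hij.le)
      simp only [Fin.mk_lt_mk]
      omega
  invFun g := ⟨fun j => g j.rev - j.rev, fun a b hab => by
      have hrev : b.rev ≤ a.rev := Fin.rev_le_rev.2 hab
      have := Fin.val_sub_val_le_of_strictMono g.strictMono (a := b.rev) (b := a.rev)
      have := Fin.le_def.1 (g.monotone hrev)
      rw [Fin.le_def] at hrev
      dsimp only
      omega,
    fun j => by
      have := Fin.val_add_sub_le_of_strictMono g.strictMono j.rev
      simp only [Fin.val_rev] at this ⊢
      omega⟩
  left_inv f := by ext j; show f.1 j.rev.rev + j.rev - j.rev = f.1 j; simp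
  right_inv g := by
    ext i
    simp [Nat.sub_add_cancel (Fin.val_le_val_of_strictMono g.strictMono i)]

theorem card_boundedAntitone (r k : ℕ) :
    Nat.card (boundedAntitone r k) = (k + r).choose r := by
  rw [Nat.card_congr ((boundedAntitoneEquivOrderEmbedding r k).trans
    Set.powersetCard.ofFinEmbEquiv), Set.powersetCard.card, Nat.card_eq_fintype_card,
    Fintype.card_fin]

def gapSequences (r m : ℕ) : Set (Fin r → ℕ) :=
  {l | Antitone l ∧ (∀ i, l i ≤ m) ∧ ∀ i : Fin r, l i ≤ i.val ∨ m - r + i.val + 1 ≤ l i}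

def gapSequencesEquivBoundedAntitone {r m : ℕ} (hrm : r ≤ m) :
    gapSequences r m ≃ boundedAntitone r r where
  toFun l := ⟨fun i => if l.1 i ≤ i then l.1 i else l.1 i - (m - r),
    Fin.antitone_of_forall_succ_le fun a b hab => by
      obtain ⟨hanti, -, hgap⟩ := l.2
      have := hanti (Fin.le_def.2 (by omega : (a : ℕ) ≤ b))
      have := hgap a
      have := hgap b
      split_ifs <;> omega,
    fun i => by
      have := l.2.2.1 i
      have := i.isLt
      beta_reduce
      split_ifs <;> omega⟩
  invFun f := ⟨fun i => if f.1 i ≤ i then f.1 i else f.1 i + (m - r),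
    Fin.antitone_of_forall_succ_le fun a b hab => by
      have := f.2.1 (Fin.le_def.2 (by omega : (a : ℕ) ≤ b))
      split_ifs <;> omega,
    fun i => by
      have := f.2.2 i
      beta_reduce
      split_ifs <;> omega,
    fun i => by
      dsimp only
      split_ifs <;> omega⟩
  left_inv l := by
    ext i
    have := l.2.2.2 i
    dsimp only
    split_ifs <;> omega
  right_inv f := by
    ext i
    dsimp only
    split_ifs <;> omega

theorem stmt15_general (n d r : ℕ) (hrd : r ≤ n - d) :
    Nat.card {l : Fin r → ℕ // Antitone l ∧ (∀ i, l i ≤ n - d) ∧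
        ∀ i : Fin r, l i ≤ i.val ∨ (n - d) - r + i.val + 1 ≤ l i} =
      Nat.choose (2 * r) r := by
  rw [two_mul, ← card_boundedAntitone]
  exact Nat.card_congr (gapSequencesEquivBoundedAntitone hrd)

theorem stmt15 (n d r : ℕ) (hr1 : 1 ≤ r) (hrd : r ≤ n - d) :
    Nat.card {l : Fin r → ℕ // Antitone l ∧ (∀ i, l i ≤ n - d) ∧
        ∀ i : Fin r, l i ≤ i.val ∨ (n - d) - r + i.val + 1 ≤ l i} =
      Nat.choose (2 * r) r :=
  stmt15_general n d r hrd
end
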